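/- arXiv:2605.30781 — 7 statements merged into one kernel-verified Lean document; each statement's English description precedes it below -/
import Mathlib

section
/- For every simplicial complex Δ on a finite vertex set V there exists an integer q > 0 such that δ_NF^(q)(Δ) = Δ; in particular, the NF-operator δ_NF is injective on simplicial complexes on V and its orbit through Δ is periodic. -/
/-- `C` is a vertex cover of the complex with facet family `F`:
it meets every facet. -/
def IsVC {V : Type*} (F : Set (Set V)) (C : Set V) : Prop :=
  ∀ f ∈ F, (C ∩ f).Nonempty

/-- `C` is a minimal vertex cover. -/
def IsMinVC {V : Type*} (F : Set (Set V)) (C : Set V) : Prop :=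
  IsVC F C ∧ ∀ D : Set V, D ⊂ C → ¬ IsVC F D

/-- The NF-operator on facet families: the facets of `nf F` are the
complements of the minimal vertex covers of `F`. -/
def nf {V : Type*} (F : Set (Set V)) : Set (Set V) :=
  {S | ∃ C : Set V, IsMinVC F C ∧ S = Cᶜ}

/-- The transversal operator: the family of minimal vertex covers. -/
def tr {V : Type*} (F : Set (Set V)) : Set (Set V) := {C | IsMinVC F C}

section Aux

set_option linter.unusedSectionVars false

variable {V : Type*} [Fintype V]

/-- Every vertex cover contains a minimal vertex cover (finiteness). -/
lemma exists_min_vc (F : Set (Set V)) {C : Set V} (hC : IsVC F C) :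
    ∃ D, D ⊆ C ∧ IsMinVC F D := by
  obtain ⟨m, ⟨hmC, hm⟩, hmin⟩ := (wellFounded_lt (α := Set V)).has_min
    {D | D ⊆ C ∧ IsVC F D} ⟨C, subset_rfl, hC⟩
  refine ⟨m, hmC, hm, fun D hD hDv => hmin D ⟨hD.subset.trans hmC, hDv⟩ ?_⟩
  exact hD

/-- Each facet of an antichain is a minimal vertex cover of the family of
minimal vertex covers. -/
lemma facet_min_vc_tr {F : Set (Set V)} (hF : IsAntichain (· ⊆ ·) F)
    {f : Set V} (hf : f ∈ F) : IsMinVC (tr F) f := by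
  constructor
  · intro C hC
    rw [Set.inter_comm]
    exact hC.1 f hf
  · intro D hD hDvc
    -- `Dᶜ` is a vertex cover of `F`
    have hDc : IsVC F Dᶜ := by
      intro g hg
      rw [Set.inter_comm, ← Set.not_disjoint_iff_nonempty_inter]
      intro hdis
      have hgD : g ⊆ D := by
        intro x hx
        by_contra hxD
        exact (hdis.ne_of_mem hx hxD) rfl
      have hgf : g ⊆ f := hgD.trans hD.subset
      rcases eq_or_ne g f with rfl | hne
      · exact hD.not_subset hgD
      · exact hF hg hf hne hgf
    obtain ⟨C, hCsub, hCmin⟩ := exists_min_vc F hDc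
    obtain ⟨x, hxD, hxC⟩ := hDvc C hCmin
    exact (hCsub hxC) hxD

/-- Berge duality: for antichains over a finite vertex set, the
minimal-transversal operator is an involution. -/
lemma tr_tr {F : Set (Set V)} (hF : IsAntichain (· ⊆ ·) F) : tr (tr F) = F := by
  ext g
  constructor
  · rintro ⟨hgvc, hgmin⟩
    -- `gᶜ` is not a vertex cover of `F`
    have hnot : ¬ IsVC F gᶜ := by
      intro h
      obtain ⟨C, hCsub, hCmin⟩ := exists_min_vc F h
      obtain ⟨x, hxg, hxC⟩ := hgvc C hCmin
      exact (hCsub hxC) hxg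
    -- hence some facet `f ⊆ g`
    simp only [IsVC, not_forall] at hnot
    obtain ⟨f, hf, hfe⟩ := hnot
    have hfg : f ⊆ g := by
      intro x hx
      by_contra hxg
      exact hfe ⟨x, hxg, hx⟩
    have hfmin := facet_min_vc_tr hF hf
    rcases eq_or_ne f g with rfl | hne
    · exact hf
    · exact absurd hfmin.1 (hgmin f ⟨hfg, fun h => hne (subset_antisymm hfg h)⟩)
  · exact fun hg => facet_min_vc_tr hF hg

lemma nf_eq_image (F : Set (Set V)) : nf F = compl '' tr F := by
  ext S
  constructor
  · rintro ⟨C, hC, rfl⟩; exact ⟨C, hC, rfl⟩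
  · rintro ⟨C, hC, rfl⟩; exact ⟨C, hC, rfl⟩

/-- `tr F` is an antichain. -/
lemma tr_antichain (F : Set (Set V)) : IsAntichain (· ⊆ ·) (tr F) := by
  intro C hC D hD hne hsub
  exact hD.2 C (ssubset_of_subset_of_ne hsub hne) hC.1

/-- `nf F` is an antichain. -/
lemma nf_antichain (F : Set (Set V)) : IsAntichain (· ⊆ ·) (nf F) := by
  rw [nf_eq_image]
  rintro _ ⟨C, hC, rfl⟩ _ ⟨D, hD, rfl⟩ hne hsub
  exact tr_antichain F hD hC (fun h => hne (h ▸ rfl))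
    (Set.compl_subset_compl.mp hsub)

lemma nf_injOn : ∀ F₁ F₂ : Set (Set V), IsAntichain (· ⊆ ·) F₁ →
    IsAntichain (· ⊆ ·) F₂ → nf F₁ = nf F₂ → F₁ = F₂ := by
  intro F₁ F₂ h₁ h₂ h
  have htr : tr F₁ = tr F₂ := by
    rw [nf_eq_image, nf_eq_image] at h
    have := congrArg (Set.image compl) h
    rwa [Set.compl_compl_image, Set.compl_compl_image] at this
  rw [← tr_tr h₁, ← tr_tr h₂, htr]

end Aux

/-- For every simplicial complex on a finite vertex set there is `q > 0` with
`δ_NF^(q)(Δ) = Δ`; in particular `δ_NF` is injective on simplicial complexes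
on `V` (so the orbit through `Δ` is periodic). -/
theorem nf_exists_period {V : Type*} [Fintype V]
    (F : Set (Set V)) (hF : IsAntichain (· ⊆ ·) F) :
    (∃ q : ℕ, 0 < q ∧ nf^[q] F = F) ∧
    (∀ F₁ F₂ : Set (Set V), IsAntichain (· ⊆ ·) F₁ → IsAntichain (· ⊆ ·) F₂ →
      nf F₁ = nf F₂ → F₁ = F₂) := by
  refine ⟨?_, nf_injOn⟩
  -- work with the finite type of antichains
  set A := {G : Set (Set V) // IsAntichain (· ⊆ ·) G} with hA
  have : Finite A := by
    have : Finite (Set (Set V)) := inferInstance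
    exact Subtype.finite
  let g : A → A := fun x => ⟨nf x.1, nf_antichain x.1⟩
  have hginj : Function.Injective g := by
    rintro ⟨G₁, h₁⟩ ⟨G₂, h₂⟩ h
    exact Subtype.ext (nf_injOn G₁ G₂ h₁ h₂ (congrArg Subtype.val h))
  have hiter : ∀ n : ℕ, ∀ x : A, (g^[n] x).1 = nf^[n] x.1 := by
    intro n
    induction n with
    | zero => intro x; rfl
    | succ n ih =>
      intro x
      rw [Function.iterate_succ_apply', Function.iterate_succ_apply']
      exact congrArg nf (ih x)
  -- an injective self-map of a finite type is bijective, hence a permutation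
  have hbij : Function.Bijective g := Finite.injective_iff_bijective.mp hginj
  let e : Equiv.Perm A := Equiv.ofBijective g hbij
  have hord : 0 < orderOf e := by
    have : Finite (Equiv.Perm A) := inferInstance
    exact orderOf_pos e
  refine ⟨orderOf e, hord, ?_⟩
  have hpow : e ^ orderOf e = 1 := pow_orderOf_eq_one e
  have hx : g^[orderOf e] ⟨F, hF⟩ = ⟨F, hF⟩ := by
    have : (e ^ orderOf e) ⟨F, hF⟩ = ⟨F, hF⟩ := by rw [hpow]; rfl
    rwa [← Equiv.Perm.iterate_eq_pow] at this
  have := hiter (orderOf e) ⟨F, hF⟩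
  rw [hx] at this
  exact this.symm
end

section
/- Let n, m ≥ 2 and let G = B_{n,m} be the dumbbell graph. A subset C ⊆ V is a minimal vertex cover of G if and only if C = (A ∖ {x_i}) ∪ (B ∖ {y_j}) for some pair of indices (i, j) with 1 ≤ i ≤ n, 1 ≤ j ≤ m and (i, j) ≠ (1, 1). -/
/-- The dumbbell graph `B_{n,m}` as a family of edges (facets) on the vertex
set `Fin n ⊕ Fin m`: all pairs inside `A = range Sum.inl`, all pairs inside
`B = range Sum.inr`, and the bridge edge `{x₁, y₁}` (indices `0`). -/
def dumbbell (n m : ℕ) : Set (Set (Fin n ⊕ Fin m)) :=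
  {e | (∃ i j : Fin n, i ≠ j ∧ e = {Sum.inl i, Sum.inl j}) ∨
       (∃ i j : Fin m, i ≠ j ∧ e = {Sum.inr i, Sum.inr j}) ∨
       (∃ (hn : 0 < n) (hm : 0 < m), e = {Sum.inl ⟨0, hn⟩, Sum.inr ⟨0, hm⟩})}

/-- For `n, m ≥ 2`, a subset `C` is a minimal vertex cover of the dumbbell graph
`B_{n,m}` iff `C = (A ∖ {xᵢ}) ∪ (B ∖ {yⱼ})` for some pair `(i, j) ≠ (1, 1)`. -/
theorem dumbbell_minVC (n m : ℕ) (hn : 2 ≤ n) (hm : 2 ≤ m)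
    (C : Set (Fin n ⊕ Fin m)) :
    IsMinVC (dumbbell n m) C ↔
      ∃ (i : Fin n) (j : Fin m),
        ¬(i = (⟨0, by omega⟩ : Fin n) ∧ j = (⟨0, by omega⟩ : Fin m)) ∧
        C = (Set.range Sum.inl \ {Sum.inl i}) ∪
            (Set.range Sum.inr \ {Sum.inr j}) := by
  have hn0 : 0 < n := by omega
  have hm0 : 0 < m := by omega
  constructor
  · rintro ⟨hVC, hmin⟩
    have hA : ∀ a b : Fin n, a ≠ b → Sum.inl a ∈ C ∨ Sum.inl b ∈ C := by
      intro a b hab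
      obtain ⟨v, hvC, hv⟩ := hVC _ (Or.inl ⟨a, b, hab, rfl⟩)
      simp only [Set.mem_insert_iff, Set.mem_singleton_iff] at hv
      rcases hv with rfl | rfl
      · exact Or.inl hvC
      · exact Or.inr hvC
    have hB : ∀ a b : Fin m, a ≠ b → Sum.inr a ∈ C ∨ Sum.inr b ∈ C := by
      intro a b hab
      obtain ⟨v, hvC, hv⟩ := hVC _ (Or.inr (Or.inl ⟨a, b, hab, rfl⟩))
      simp only [Set.mem_insert_iff, Set.mem_singleton_iff] at hv
      rcases hv with rfl | rfl
      · exact Or.inl hvC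
      · exact Or.inr hvC
    have hbr : Sum.inl (⟨0, hn0⟩ : Fin n) ∈ C ∨ Sum.inr (⟨0, hm0⟩ : Fin m) ∈ C := by
      obtain ⟨v, hvC, hv⟩ := hVC _ (Or.inr (Or.inr ⟨hn0, hm0, rfl⟩))
      simp only [Set.mem_insert_iff, Set.mem_singleton_iff] at hv
      rcases hv with rfl | rfl
      · exact Or.inl hvC
      · exact Or.inr hvC
    have hiex : ∃ i : Fin n, Sum.inl i ∉ C := by
      by_contra h
      push_neg at h
      refine hmin (C \ {Sum.inl (⟨1, by omega⟩ : Fin n)})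
        (Set.sdiff_singleton_ssubset.mpr (h _)) ?_
      rintro e (⟨a, b, hab, rfl⟩ | ⟨a, b, hab, rfl⟩ | ⟨hn', hm', rfl⟩)
      · by_cases ha : a = (⟨1, by omega⟩ : Fin n)
        · refine ⟨Sum.inl b, ⟨h b, ?_⟩, by simp⟩
          simp only [Set.mem_singleton_iff, Sum.inl.injEq]
          intro hb; exact hab (ha.trans hb.symm)
        · exact ⟨Sum.inl a, ⟨h a, by simpa using ha⟩, by simp⟩
      · obtain ⟨v, hvC, hve⟩ := hVC _ (Or.inr (Or.inl ⟨a, b, hab, rfl⟩))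
        refine ⟨v, ⟨hvC, ?_⟩, hve⟩
        simp only [Set.mem_insert_iff, Set.mem_singleton_iff] at hve
        rcases hve with rfl | rfl <;> simp
      · refine ⟨Sum.inl ⟨0, hn'⟩, ⟨h _, ?_⟩, by simp⟩
        simp only [Set.mem_singleton_iff, Sum.inl.injEq, Fin.mk.injEq]
        omega
    have hjex : ∃ j : Fin m, Sum.inr j ∉ C := by
      by_contra h
      push_neg at h
      refine hmin (C \ {Sum.inr (⟨1, by omega⟩ : Fin m)})
        (Set.sdiff_singleton_ssubset.mpr (h _)) ?_
      rintro e (⟨a, b, hab, rfl⟩ | ⟨a, b, hab, rfl⟩ | ⟨hn', hm', rfl⟩)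
      · obtain ⟨v, hvC, hve⟩ := hVC _ (Or.inl ⟨a, b, hab, rfl⟩)
        refine ⟨v, ⟨hvC, ?_⟩, hve⟩
        simp only [Set.mem_insert_iff, Set.mem_singleton_iff] at hve
        rcases hve with rfl | rfl <;> simp
      · by_cases ha : a = (⟨1, by omega⟩ : Fin m)
        · refine ⟨Sum.inr b, ⟨h b, ?_⟩, by simp⟩
          simp only [Set.mem_singleton_iff, Sum.inr.injEq]
          intro hb; exact hab (ha.trans hb.symm)
        · exact ⟨Sum.inr a, ⟨h a, by simpa using ha⟩, by simp⟩
      · refine ⟨Sum.inr ⟨0, hm'⟩, ⟨h _, ?_⟩, by simp⟩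
        simp only [Set.mem_singleton_iff, Sum.inr.injEq, Fin.mk.injEq]
        omega
    obtain ⟨i, hi⟩ := hiex
    obtain ⟨j, hj⟩ := hjex
    refine ⟨i, j, ?_, ?_⟩
    · rintro ⟨rfl, rfl⟩
      rcases hbr with h | h
      · exact hi h
      · exact hj h
    · ext v
      rcases v with a | b
      · simp only [Set.mem_union, Set.mem_diff, Set.mem_range, Set.mem_singleton_iff,
          Sum.inl.injEq, Sum.inr.injEq, exists_eq, true_and]
        constructor
        · intro hC
          left
          intro ha
          exact hi (ha ▸ hC)
        · rintro (ha | ⟨⟨w, hw⟩, -⟩)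
          · exact (hA a i ha).resolve_right hi
          · exact absurd hw (by simp)
      · simp only [Set.mem_union, Set.mem_diff, Set.mem_range, Set.mem_singleton_iff,
          Sum.inl.injEq, Sum.inr.injEq, exists_eq, true_and]
        constructor
        · intro hC
          right
          intro hb
          exact hj (hb ▸ hC)
        · rintro (⟨⟨w, hw⟩, -⟩ | hb)
          · exact absurd hw (by simp)
          · exact (hB b j hb).resolve_right hj
  · rintro ⟨i, j, hij, rfl⟩
    constructor
    · rintro e (⟨a, b, hab, rfl⟩ | ⟨a, b, hab, rfl⟩ | ⟨hn', hm', rfl⟩)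
      · by_cases ha : a = i
        · refine ⟨Sum.inl b, Or.inl ⟨⟨b, rfl⟩, ?_⟩, by simp⟩
          simp only [Set.mem_singleton_iff, Sum.inl.injEq]
          intro hb; exact hab (ha.trans hb.symm)
        · exact ⟨Sum.inl a, Or.inl ⟨⟨a, rfl⟩, by simpa using ha⟩, by simp⟩
      · by_cases ha : a = j
        · refine ⟨Sum.inr b, Or.inr ⟨⟨b, rfl⟩, ?_⟩, by simp⟩
          simp only [Set.mem_singleton_iff, Sum.inr.injEq]
          intro hb; exact hab (ha.trans hb.symm)
        · exact ⟨Sum.inr a, Or.inr ⟨⟨a, rfl⟩, by simpa using ha⟩, by simp⟩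
      · by_cases hi0 : i = (⟨0, by omega⟩ : Fin n)
        · have hj0 : j ≠ (⟨0, by omega⟩ : Fin m) := fun h => hij ⟨hi0, h⟩
          refine ⟨Sum.inr ⟨0, hm'⟩, Or.inr ⟨⟨_, rfl⟩, ?_⟩, by simp⟩
          simp only [Set.mem_singleton_iff, Sum.inr.injEq]
          exact fun h => hj0 h.symm
        · refine ⟨Sum.inl ⟨0, hn'⟩, Or.inl ⟨⟨_, rfl⟩, ?_⟩, by simp⟩
          simp only [Set.mem_singleton_iff, Sum.inl.injEq]
          exact fun h => hi0 h.symm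
    · intro D hD hDVC
      obtain ⟨v, hvC, hvD⟩ := Set.exists_of_ssubset hD
      have hDsub := hD.subset
      have hiC : Sum.inl i ∉ (Set.range Sum.inl \ {Sum.inl i}) ∪
          (Set.range Sum.inr \ {Sum.inr j}) := by simp
      have hjC : Sum.inr j ∉ (Set.range Sum.inl \ {Sum.inl i}) ∪
          (Set.range Sum.inr \ {Sum.inr j}) := by simp
      rcases v with a | b
      · have ha : a ≠ i := by
          rintro rfl; exact hiC hvC
        obtain ⟨w, hwD, hwe⟩ := hDVC _ (Or.inl ⟨a, i, ha, rfl⟩)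
        simp only [Set.mem_insert_iff, Set.mem_singleton_iff] at hwe
        rcases hwe with rfl | rfl
        · exact hvD hwD
        · exact hiC (hDsub hwD)
      · have hb : b ≠ j := by
          rintro rfl; exact hjC hvC
        obtain ⟨w, hwD, hwe⟩ := hDVC _ (Or.inr (Or.inl ⟨b, j, hb, rfl⟩))
        simp only [Set.mem_insert_iff, Set.mem_singleton_iff] at hwe
        rcases hwe with rfl | rfl
        · exact hvD hwD
        · exact hjC (hDsub hwD)
end

section
/- Let n, m ≥ 2 with max{n, m} ≥ 3 and let G = B_{n,m} be the dumbbell graph, viewed as the simplicial complex Δ(G). Then δ_NF^(k)(Δ(G)) is not isomorphic to Δ(G) for k = 1 and k = 2. Moreover, for any k ≥ 0, if δ_NF^(k)(Δ(G)) has a facet of cardinality at least 3, then δ_NF^(k)(Δ(G)) is not isomorphic to Δ(G). -/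
/-- Two complexes on the same vertex set are isomorphic if some permutation of
the vertices carries the facet family of one onto that of the other. -/
def IsIsoC {V : Type*} (F G : Set (Set V)) : Prop :=
  ∃ π : V ≃ V, ∀ S : Set V, S ∈ F ↔ π '' S ∈ G

lemma isMinVC_iff {V : Type*} {F : Set (Set V)} {C : Set V} :
    IsMinVC F C ↔ IsVC F C ∧ ∀ v ∈ C, ∃ f ∈ F, (C \ {v}) ∩ f = ∅ := by
  constructor
  · rintro ⟨hvc, hmin⟩
    refine ⟨hvc, fun v hv => ?_⟩
    have h := hmin (C \ {v}) (Set.sdiff_singleton_ssubset.mpr hv)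
    simp only [IsVC, not_forall] at h
    obtain ⟨f, hf, hne⟩ := h
    exact ⟨f, hf, Set.not_nonempty_iff_eq_empty.mp hne⟩
  · rintro ⟨hvc, hmin⟩
    refine ⟨hvc, fun D hD hDvc => ?_⟩
    obtain ⟨v, hvC, hvD⟩ := Set.exists_of_ssubset hD
    obtain ⟨f, hf, hemp⟩ := hmin v hvC
    obtain ⟨x, hxD, hxf⟩ := hDvc f hf
    have hxC : x ∈ C \ {v} := ⟨hD.1 hxD, by simp; rintro rfl; exact hvD hxD⟩
    exact Set.eq_empty_iff_forall_notMem.mp hemp x ⟨hxC, hxf⟩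

def cross (n m : ℕ) : Set (Set (Fin n ⊕ Fin m)) :=
  {e | ∃ (i : Fin n) (j : Fin m), ¬((i : ℕ) = 0 ∧ (j : ℕ) = 0) ∧ e = {Sum.inl i, Sum.inr j}}

lemma dumbbell_card2 {n m : ℕ} {e : Set (Fin n ⊕ Fin m)} (he : e ∈ dumbbell n m) :
    e.ncard = 2 := by
  rcases he with ⟨i, j, hij, rfl⟩ | ⟨i, j, hij, rfl⟩ | ⟨hn, hm, rfl⟩
  · exact Set.ncard_pair (by simp [hij])
  · exact Set.ncard_pair (by simp [hij])
  · exact Set.ncard_pair (by simp)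

lemma not_iso_of_big {n m : ℕ} {F : Set (Set (Fin n ⊕ Fin m))}
    (hF : ∃ S ∈ F, 3 ≤ S.ncard) : ¬ IsIsoC F (dumbbell n m) := by
  rintro ⟨π, hπ⟩
  obtain ⟨S, hS, h3⟩ := hF
  have hmem := (hπ S).mp hS
  have hcard : (π '' S).ncard = S.ncard := Set.ncard_image_of_injective _ π.injective
  have h2 := dumbbell_card2 hmem
  omega

lemma nf_dumbbell_eq {n m : ℕ} (hn : 2 ≤ n) (hm : 2 ≤ m) :
    nf (dumbbell n m) = cross n m := by
  ext S
  constructor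
  · rintro ⟨C, hC, rfl⟩
    rw [isMinVC_iff] at hC
    obtain ⟨hvc, hmin⟩ := hC
    -- each v ∈ C has a facet through v avoiding C \ {v}
    have hex : ∀ v ∈ C, ∃ f ∈ dumbbell n m, v ∈ f ∧ (C \ {v}) ∩ f = ∅ := by
      intro v hv
      obtain ⟨f, hf, he⟩ := hmin v hv
      obtain ⟨x, hxC, hxf⟩ := hvc f hf
      have hxv : x = v := by
        by_contra hne
        exact Set.eq_empty_iff_forall_notMem.mp he x ⟨⟨hxC, by simpa using hne⟩, hxf⟩
      exact ⟨f, hf, hxv ▸ hxf, he⟩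
    -- there is a left vertex outside C
    have hL : ∃ i : Fin n, Sum.inl i ∉ C := by
      by_contra h
      push_neg at h
      obtain ⟨f, hf, hvf, hemp⟩ := hex (Sum.inl ⟨0, by omega⟩) (h _)
      have key : ∀ x, x ∈ f → x ∈ C → x ≠ Sum.inl (⟨0, by omega⟩ : Fin n) → False :=
        fun x hxf hxC hxv =>
          Set.eq_empty_iff_forall_notMem.mp hemp x ⟨⟨hxC, by simpa using hxv⟩, hxf⟩
      rcases hf with ⟨i, j, hij, rfl⟩ | ⟨i, j, hij, rfl⟩ | ⟨hn', hm', rfl⟩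
      · rcases eq_or_ne (Sum.inl i) (Sum.inl (⟨0, by omega⟩ : Fin n) : Fin n ⊕ Fin m) with h0 | h0
        · exact key (Sum.inl j) (by simp) (h _) (by rw [← h0]; simp [Ne.symm hij])
        · exact key (Sum.inl i) (by simp) (h _) h0
      · simp at hvf
      · -- bridge: inr 0 ∉ C
        have hB0 : Sum.inr (⟨0, by omega⟩ : Fin m) ∉ C := fun hc =>
          key (Sum.inr ⟨0, by omega⟩) (by simp) hc (by simp)
        obtain ⟨f', hf', hvf', hemp'⟩ := hex (Sum.inl ⟨1, by omega⟩) (h _)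
        have key' : ∀ x, x ∈ f' → x ∈ C → x ≠ Sum.inl (⟨1, by omega⟩ : Fin n) → False :=
          fun x hxf hxC hxv =>
            Set.eq_empty_iff_forall_notMem.mp hemp' x ⟨⟨hxC, by simpa using hxv⟩, hxf⟩
        rcases hf' with ⟨i, j, hij, rfl⟩ | ⟨i, j, hij, rfl⟩ | ⟨hn', hm', rfl⟩
        · rcases eq_or_ne (Sum.inl i) (Sum.inl (⟨1, by omega⟩ : Fin n) : Fin n ⊕ Fin m) with h1 | h1
          · exact key' (Sum.inl j) (by simp) (h _) (by rw [← h1]; simp [Ne.symm hij])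
          · exact key' (Sum.inl i) (by simp) (h _) h1
        · simp at hvf'
        · simp [Fin.ext_iff] at hvf'
    -- there is a right vertex outside C
    have hR : ∃ j : Fin m, Sum.inr j ∉ C := by
      by_contra h
      push_neg at h
      obtain ⟨f, hf, hvf, hemp⟩ := hex (Sum.inr ⟨0, by omega⟩) (h _)
      have key : ∀ x, x ∈ f → x ∈ C → x ≠ Sum.inr (⟨0, by omega⟩ : Fin m) → False :=
        fun x hxf hxC hxv =>
          Set.eq_empty_iff_forall_notMem.mp hemp x ⟨⟨hxC, by simpa using hxv⟩, hxf⟩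
      rcases hf with ⟨i, j, hij, rfl⟩ | ⟨i, j, hij, rfl⟩ | ⟨hn', hm', rfl⟩
      · simp at hvf
      · rcases eq_or_ne (Sum.inr i) (Sum.inr (⟨0, by omega⟩ : Fin m) : Fin n ⊕ Fin m) with h0 | h0
        · exact key (Sum.inr j) (by simp) (h _) (by rw [← h0]; simp [Ne.symm hij])
        · exact key (Sum.inr i) (by simp) (h _) h0
      · have hA0 : Sum.inl (⟨0, by omega⟩ : Fin n) ∉ C := fun hc =>
          key (Sum.inl ⟨0, by omega⟩) (by simp) hc (by simp)
        obtain ⟨f', hf', hvf', hemp'⟩ := hex (Sum.inr ⟨1, by omega⟩) (h _)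
        have key' : ∀ x, x ∈ f' → x ∈ C → x ≠ Sum.inr (⟨1, by omega⟩ : Fin m) → False :=
          fun x hxf hxC hxv =>
            Set.eq_empty_iff_forall_notMem.mp hemp' x ⟨⟨hxC, by simpa using hxv⟩, hxf⟩
        rcases hf' with ⟨i, j, hij, rfl⟩ | ⟨i, j, hij, rfl⟩ | ⟨hn', hm', rfl⟩
        · simp at hvf'
        · rcases eq_or_ne (Sum.inr i) (Sum.inr (⟨1, by omega⟩ : Fin m) : Fin n ⊕ Fin m) with h1 | h1
          · exact key' (Sum.inr j) (by simp) (h _) (by rw [← h1]; simp [Ne.symm hij])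
          · exact key' (Sum.inr i) (by simp) (h _) h1
        · simp [Fin.ext_iff] at hvf'
    obtain ⟨i, hi⟩ := hL
    obtain ⟨j, hj⟩ := hR
    -- uniqueness on each side
    have huL : ∀ i' : Fin n, Sum.inl i' ∉ C → i' = i := by
      intro i' hi'
      by_contra hne
      obtain ⟨x, hxC, hxe⟩ := hvc {Sum.inl i', Sum.inl i} (Or.inl ⟨i', i, hne, rfl⟩)
      rcases hxe with rfl | rfl
      · exact hi' hxC
      · exact hi hxC
    have huR : ∀ j' : Fin m, Sum.inr j' ∉ C → j' = j := by
      intro j' hj'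
      by_contra hne
      obtain ⟨x, hxC, hxe⟩ := hvc {Sum.inr j', Sum.inr j} (Or.inr (Or.inl ⟨j', j, hne, rfl⟩))
      rcases hxe with rfl | rfl
      · exact hj' hxC
      · exact hj hxC
    have hnz : ¬((i : ℕ) = 0 ∧ (j : ℕ) = 0) := by
      rintro ⟨hi0, hj0⟩
      obtain ⟨x, hxC, hxe⟩ := hvc {Sum.inl ⟨0, by omega⟩, Sum.inr ⟨0, by omega⟩}
        (Or.inr (Or.inr ⟨by omega, by omega, rfl⟩))
      rcases hxe with rfl | rfl
      · exact hi (by rwa [show (⟨0, by omega⟩ : Fin n) = i from Fin.ext (by simpa using hi0.symm)] at hxC)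
      · exact hj (by rwa [show (⟨0, by omega⟩ : Fin m) = j from Fin.ext (by simpa using hj0.symm)] at hxC)
    refine ⟨i, j, hnz, ?_⟩
    ext x
    simp only [Set.mem_compl_iff, Set.mem_insert_iff, Set.mem_singleton_iff]
    constructor
    · intro hx
      rcases x with a | b
      · exact Or.inl (by rw [huL a hx])
      · exact Or.inr (by rw [huR b hx])
    · rintro (rfl | rfl)
      · exact hi
      · exact hj
  · rintro ⟨i, j, hij, rfl⟩
    refine ⟨{Sum.inl i, Sum.inr j}ᶜ, ?_, (compl_compl _).symm⟩
    rw [isMinVC_iff]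
    constructor
    · rintro f (⟨a, b, hab, rfl⟩ | ⟨a, b, hab, rfl⟩ | ⟨hn', hm', rfl⟩)
      · rcases eq_or_ne a i with rfl | hne
        · exact ⟨Sum.inl b, by simp [Ne.symm hab], by simp⟩
        · exact ⟨Sum.inl a, by simp [hne], by simp⟩
      · rcases eq_or_ne a j with rfl | hne
        · exact ⟨Sum.inr b, by simp [Ne.symm hab], by simp⟩
        · exact ⟨Sum.inr a, by simp [hne], by simp⟩
      · rcases (not_and_or.mp hij) with h0 | h0
        · refine ⟨Sum.inl ⟨0, hn'⟩, by simp [Fin.ext_iff]; omega, by simp⟩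
        · refine ⟨Sum.inr ⟨0, hm'⟩, by simp [Fin.ext_iff]; omega, by simp⟩
    · intro v hv
      simp only [Set.mem_compl_iff, Set.mem_insert_iff, Set.mem_singleton_iff, not_or] at hv
      obtain ⟨hv1, hv2⟩ := hv
      rcases v with a | b
      · have hai : a ≠ i := fun h => hv1 (by rw [h])
        refine ⟨{Sum.inl a, Sum.inl i}, Or.inl ⟨a, i, hai, rfl⟩, ?_⟩
        ext x
        simp only [Set.mem_inter_iff, Set.mem_diff, Set.mem_compl_iff, Set.mem_insert_iff,
          Set.mem_singleton_iff, Set.mem_empty_iff_false, iff_false, not_and, not_or]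
        rintro ⟨h1, h2⟩
        exact ⟨h2, h1.1⟩
      · have hbj : b ≠ j := fun h => hv2 (by rw [h])
        refine ⟨{Sum.inr b, Sum.inr j}, Or.inr (Or.inl ⟨b, j, hbj, rfl⟩), ?_⟩
        ext x
        simp only [Set.mem_inter_iff, Set.mem_diff, Set.mem_compl_iff, Set.mem_insert_iff,
          Set.mem_singleton_iff, Set.mem_empty_iff_false, iff_false, not_and, not_or]
        rintro ⟨h1, h2⟩
        exact ⟨h2, h1.2⟩

lemma nf_cross_eq {n m : ℕ} (hn : 2 ≤ n) (hm : 2 ≤ m) :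
    nf (cross n m) =
      {Set.range Sum.inl, Set.range Sum.inr,
        {Sum.inl ⟨0, by omega⟩, Sum.inr ⟨0, by omega⟩}} := by
  ext S
  constructor
  · rintro ⟨C, hC, rfl⟩
    rw [isMinVC_iff] at hC
    obtain ⟨hvc, hmin⟩ := hC
    have hex : ∀ v ∈ C, ∃ f ∈ cross n m, v ∈ f ∧ (C \ {v}) ∩ f = ∅ := by
      intro v hv
      obtain ⟨f, hf, he⟩ := hmin v hv
      obtain ⟨x, hxC, hxf⟩ := hvc f hf
      have hxv : x = v := by
        by_contra hne
        exact Set.eq_empty_iff_forall_notMem.mp he x ⟨⟨hxC, by simpa using hne⟩, hxf⟩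
      exact ⟨f, hf, hxv ▸ hxf, he⟩
    -- independence: no cross-edge inside Cᶜ
    have hind : ∀ (i : Fin n) (j : Fin m), ¬((i : ℕ) = 0 ∧ (j : ℕ) = 0) →
        Sum.inl i ∉ C → Sum.inr j ∉ C → False := by
      intro i j hij hi hj
      obtain ⟨x, hxC, hxe⟩ := hvc {Sum.inl i, Sum.inr j} ⟨i, j, hij, rfl⟩
      rcases hxe with rfl | rfl
      · exact hi hxC
      · exact hj hxC
    by_cases hA : ∃ i : Fin n, Sum.inl i ∉ C
    · by_cases hB : ∃ j : Fin m, Sum.inr j ∉ C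
      · -- Cᶜ = {inl 0, inr 0}
        obtain ⟨i, hi⟩ := hA
        obtain ⟨j, hj⟩ := hB
        have hi0 : (i : ℕ) = 0 ∧ (j : ℕ) = 0 := by
          by_contra hc
          exact hind i j hc hi hj
        right; right
        ext x
        simp only [Set.mem_compl_iff, Set.mem_insert_iff, Set.mem_singleton_iff]
        constructor
        · intro hx
          rcases x with a | b
          · left
            have : (a : ℕ) = 0 := by
              by_contra hc
              exact hind a j (by omega) hx hj
            exact congrArg Sum.inl (Fin.ext this)
          · right
            have : (b : ℕ) = 0 := by
              by_contra hc
              exact hind i b (by omega) hi hx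
            exact congrArg Sum.inr (Fin.ext this)
        · rintro (rfl | rfl)
          · rwa [show (⟨0, by omega⟩ : Fin n) = i from Fin.ext (by simpa using hi0.1.symm)]
          · rwa [show (⟨0, by omega⟩ : Fin m) = j from Fin.ext (by simpa using hi0.2.symm)]
      · -- all inr in C; Cᶜ = range inl
        push_neg at hB
        obtain ⟨i, hi⟩ := hA
        left
        ext x
        simp only [Set.mem_compl_iff, Set.mem_range]
        constructor
        · intro hx
          rcases x with a | b
          · exact ⟨a, rfl⟩
          · exact absurd (hB b) hx
        · rintro ⟨a, rfl⟩
          intro haC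
          obtain ⟨f, hf, hvf, hemp⟩ := hex (Sum.inl a) haC
          obtain ⟨i', j', hij', rfl⟩ := hf
          have hj'C : Sum.inr j' ∈ C \ {Sum.inl a} := ⟨hB j', by simp⟩
          exact Set.eq_empty_iff_forall_notMem.mp hemp (Sum.inr j') ⟨hj'C, by simp⟩
    · push_neg at hA
      by_cases hB : ∃ j : Fin m, Sum.inr j ∉ C
      · obtain ⟨j, hj⟩ := hB
        right; left
        ext x
        simp only [Set.mem_compl_iff, Set.mem_range]
        constructor
        · intro hx
          rcases x with a | b
          · exact absurd (hA a) hx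
          · exact ⟨b, rfl⟩
        · rintro ⟨b, rfl⟩
          intro hbC
          obtain ⟨f, hf, hvf, hemp⟩ := hex (Sum.inr b) hbC
          obtain ⟨i', j', hij', rfl⟩ := hf
          have hi'C : Sum.inl i' ∈ C \ {Sum.inr b} := ⟨hA i', by simp⟩
          exact Set.eq_empty_iff_forall_notMem.mp hemp (Sum.inl i') ⟨hi'C, by simp⟩
      · -- C = univ: contradiction with minimality
        push_neg at hB
        exfalso
        obtain ⟨f, hf, hvf, hemp⟩ := hex (Sum.inl ⟨0, by omega⟩) (hA _)
        obtain ⟨i', j', hij', rfl⟩ := hf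
        have hj'C : Sum.inr j' ∈ C \ {Sum.inl (⟨0, by omega⟩ : Fin n)} := ⟨hB j', by simp⟩
        exact Set.eq_empty_iff_forall_notMem.mp hemp (Sum.inr j') ⟨hj'C, by simp⟩
  · intro hS
    rcases hS with rfl | rfl | rfl
    · -- range inl : C = (range inl)ᶜ = range inr
      refine ⟨(Set.range Sum.inl)ᶜ, ?_, (compl_compl _).symm⟩
      rw [isMinVC_iff]
      constructor
      · rintro f ⟨i, j, hij, rfl⟩
        exact ⟨Sum.inr j, by simp, by simp⟩
      · intro v hv
        simp only [Set.mem_compl_iff, Set.mem_range, not_exists] at hv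
        rcases v with a | b
        · exact absurd rfl (hv a)
        · rcases Nat.eq_zero_or_pos (b : ℕ) with hb | hb
          · refine ⟨{Sum.inl ⟨1, by omega⟩, Sum.inr b}, ⟨⟨1, by omega⟩, b, by simp, rfl⟩, ?_⟩
            ext x
            simp only [Set.mem_inter_iff, Set.mem_diff, Set.mem_compl_iff, Set.mem_range,
              Set.mem_insert_iff, Set.mem_singleton_iff, Set.mem_empty_iff_false, iff_false,
              not_and, not_exists]
            rintro ⟨h1, h2⟩ (rfl | rfl)
            · exact h1 _ rfl
            · exact h2 rfl
          · refine ⟨{Sum.inl ⟨0, by omega⟩, Sum.inr b}, ⟨⟨0, by omega⟩, b, by simp; omega, rfl⟩, ?_⟩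
            ext x
            simp only [Set.mem_inter_iff, Set.mem_diff, Set.mem_compl_iff, Set.mem_range,
              Set.mem_insert_iff, Set.mem_singleton_iff, Set.mem_empty_iff_false, iff_false,
              not_and, not_exists]
            rintro ⟨h1, h2⟩ (rfl | rfl)
            · exact h1 _ rfl
            · exact h2 rfl
    · refine ⟨(Set.range Sum.inr)ᶜ, ?_, (compl_compl _).symm⟩
      rw [isMinVC_iff]
      constructor
      · rintro f ⟨i, j, hij, rfl⟩
        exact ⟨Sum.inl i, by simp, by simp⟩
      · intro v hv
        simp only [Set.mem_compl_iff, Set.mem_range, not_exists] at hv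
        rcases v with a | b
        · rcases Nat.eq_zero_or_pos (a : ℕ) with ha | ha
          · refine ⟨{Sum.inl a, Sum.inr ⟨1, by omega⟩}, ⟨a, ⟨1, by omega⟩, by simp, rfl⟩, ?_⟩
            ext x
            simp only [Set.mem_inter_iff, Set.mem_diff, Set.mem_compl_iff, Set.mem_range,
              Set.mem_insert_iff, Set.mem_singleton_iff, Set.mem_empty_iff_false, iff_false,
              not_and, not_exists]
            rintro ⟨h1, h2⟩ (rfl | rfl)
            · exact h2 rfl
            · exact h1 _ rfl
          · refine ⟨{Sum.inl a, Sum.inr ⟨0, by omega⟩}, ⟨a, ⟨0, by omega⟩, by simp; omega, rfl⟩, ?_⟩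
            ext x
            simp only [Set.mem_inter_iff, Set.mem_diff, Set.mem_compl_iff, Set.mem_range,
              Set.mem_insert_iff, Set.mem_singleton_iff, Set.mem_empty_iff_false, iff_false,
              not_and, not_exists]
            rintro ⟨h1, h2⟩ (rfl | rfl)
            · exact h2 rfl
            · exact h1 _ rfl
        · exact absurd rfl (hv b)
    · refine ⟨{Sum.inl (⟨0, by omega⟩ : Fin n), Sum.inr (⟨0, by omega⟩ : Fin m)}ᶜ, ?_,
        (compl_compl _).symm⟩
      rw [isMinVC_iff]
      constructor
      · rintro f ⟨i, j, hij, rfl⟩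
        rcases (not_and_or.mp hij) with h0 | h0
        · exact ⟨Sum.inl i, by simp [Fin.ext_iff]; omega, by simp⟩
        · exact ⟨Sum.inr j, by simp [Fin.ext_iff]; omega, by simp⟩
      · intro v hv
        simp only [Set.mem_compl_iff, Set.mem_insert_iff, Set.mem_singleton_iff, not_or] at hv
        obtain ⟨hv1, hv2⟩ := hv
        rcases v with a | b
        · have ha : (a : ℕ) ≠ 0 := fun h => hv1 (congrArg Sum.inl (Fin.ext (by simpa using h)))
          refine ⟨{Sum.inl a, Sum.inr ⟨0, by omega⟩}, ⟨a, ⟨0, by omega⟩, by simp; omega, rfl⟩, ?_⟩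
          ext x
          simp only [Set.mem_inter_iff, Set.mem_diff, Set.mem_compl_iff, Set.mem_insert_iff,
            Set.mem_singleton_iff, Set.mem_empty_iff_false, iff_false, not_and, not_or]
          rintro ⟨h1, h2⟩
          exact ⟨h2, h1.2⟩
        · have hb : (b : ℕ) ≠ 0 := fun h => hv2 (congrArg Sum.inr (Fin.ext (by simpa using h)))
          refine ⟨{Sum.inl ⟨0, by omega⟩, Sum.inr b}, ⟨⟨0, by omega⟩, b, by simp; omega, rfl⟩, ?_⟩
          ext x
          simp only [Set.mem_inter_iff, Set.mem_diff, Set.mem_compl_iff, Set.mem_insert_iff,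
            Set.mem_singleton_iff, Set.mem_empty_iff_false, iff_false, not_and, not_or]
          rintro ⟨h1, h2⟩
          exact ⟨h1.1, h2⟩

lemma pair_cross_isLeft {n m : ℕ} {x y : Fin n ⊕ Fin m}
    (h : ({x, y} : Set (Fin n ⊕ Fin m)) ∈ cross n m) (hne : x ≠ y) :
    x.isLeft ≠ y.isLeft := by
  obtain ⟨i, j, -, heq⟩ := h
  have hx : x ∈ ({Sum.inl i, Sum.inr j} : Set (Fin n ⊕ Fin m)) := by rw [← heq]; simp
  have hy : y ∈ ({Sum.inl i, Sum.inr j} : Set (Fin n ⊕ Fin m)) := by rw [← heq]; simp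
  simp only [Set.mem_insert_iff, Set.mem_singleton_iff] at hx hy
  rcases hx with rfl | rfl <;> rcases hy with rfl | rfl <;> simp_all

lemma no_triangle_cross {n m : ℕ} {x y z : Fin n ⊕ Fin m}
    (hxy : ({x, y} : Set _) ∈ cross n m) (hyz : ({y, z} : Set _) ∈ cross n m)
    (hxz : ({x, z} : Set _) ∈ cross n m)
    (h1 : x ≠ y) (h2 : y ≠ z) (h3 : x ≠ z) : False := by
  have b1 := pair_cross_isLeft hxy h1
  have b2 := pair_cross_isLeft hyz h2
  have b3 := pair_cross_isLeft hxz h3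
  cases hx : x.isLeft <;> cases hy : y.isLeft <;> cases hz : z.isLeft <;> simp_all

lemma ncard_range_inl (n m : ℕ) :
    (Set.range (Sum.inl : Fin n → Fin n ⊕ Fin m)).ncard = n := by
  rw [← Nat.card_coe_set_eq, Nat.card_range_of_injective Sum.inl_injective,
    Nat.card_eq_fintype_card, Fintype.card_fin]

lemma ncard_range_inr (n m : ℕ) :
    (Set.range (Sum.inr : Fin m → Fin n ⊕ Fin m)).ncard = m := by
  rw [← Nat.card_coe_set_eq, Nat.card_range_of_injective Sum.inr_injective,
    Nat.card_eq_fintype_card, Fintype.card_fin]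

/-- For `n, m ≥ 2` with `max{n,m} ≥ 3`: `δ_NF^(k)(Δ(B_{n,m}))` is not
isomorphic to `Δ(B_{n,m})` for `k = 1, 2`; moreover, whenever
`δ_NF^(k)(Δ(B_{n,m}))` has a facet of cardinality at least `3`, it is not
isomorphic to `Δ(B_{n,m})`. -/
theorem dumbbell_iterates_not_iso (n m : ℕ) (hn : 2 ≤ n) (hm : 2 ≤ m)
    (h3 : 3 ≤ max n m) :
    (¬ IsIsoC (nf^[1] (dumbbell n m)) (dumbbell n m)) ∧
    (¬ IsIsoC (nf^[2] (dumbbell n m)) (dumbbell n m)) ∧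
    (∀ k : ℕ, (∃ S ∈ nf^[k] (dumbbell n m), 3 ≤ S.ncard) →
      ¬ IsIsoC (nf^[k] (dumbbell n m)) (dumbbell n m)) := by
  have h1 : nf^[1] (dumbbell n m) = cross n m := by
    rw [Function.iterate_one, nf_dumbbell_eq hn hm]
  have h2 : nf^[2] (dumbbell n m) =
      {Set.range Sum.inl, Set.range Sum.inr,
        ({Sum.inl ⟨0, by omega⟩, Sum.inr ⟨0, by omega⟩} : Set (Fin n ⊕ Fin m))} := by
    have : nf^[2] (dumbbell n m) = nf (nf^[1] (dumbbell n m)) := by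
      rw [← Function.iterate_succ_apply' nf 1]
    rw [this, h1, nf_cross_eq hn hm]
  refine ⟨?_, ?_, fun k hk => not_iso_of_big hk⟩
  · -- k = 1 : triangle argument
    rw [h1]
    rintro ⟨π, hπ⟩
    have tri : ∀ x y : Fin n ⊕ Fin m, ({x, y} : Set _) ∈ dumbbell n m →
        ({π.symm x, π.symm y} : Set _) ∈ cross n m := by
      intro x y hxy
      refine (hπ _).mpr ?_
      rw [Set.image_pair, Equiv.apply_symm_apply, Equiv.apply_symm_apply]
      exact hxy
    rcases le_max_iff.mp h3 with hn3 | hm3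
    · have e01 : ({Sum.inl ⟨0, by omega⟩, Sum.inl ⟨1, by omega⟩} : Set (Fin n ⊕ Fin m)) ∈
          dumbbell n m := Or.inl ⟨⟨0, by omega⟩, ⟨1, by omega⟩, by simp, rfl⟩
      have e12 : ({Sum.inl ⟨1, by omega⟩, Sum.inl ⟨2, by omega⟩} : Set (Fin n ⊕ Fin m)) ∈
          dumbbell n m := Or.inl ⟨⟨1, by omega⟩, ⟨2, by omega⟩, by simp, rfl⟩
      have e02 : ({Sum.inl ⟨0, by omega⟩, Sum.inl ⟨2, by omega⟩} : Set (Fin n ⊕ Fin m)) ∈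
          dumbbell n m := Or.inl ⟨⟨0, by omega⟩, ⟨2, by omega⟩, by simp, rfl⟩
      exact no_triangle_cross (tri _ _ e01) (tri _ _ e12) (tri _ _ e02)
        (π.symm.injective.ne (by simp)) (π.symm.injective.ne (by simp))
        (π.symm.injective.ne (by simp))
    · have e01 : ({Sum.inr ⟨0, by omega⟩, Sum.inr ⟨1, by omega⟩} : Set (Fin n ⊕ Fin m)) ∈
          dumbbell n m := Or.inr (Or.inl ⟨⟨0, by omega⟩, ⟨1, by omega⟩, by simp, rfl⟩)
      have e12 : ({Sum.inr ⟨1, by omega⟩, Sum.inr ⟨2, by omega⟩} : Set (Fin n ⊕ Fin m)) ∈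
          dumbbell n m := Or.inr (Or.inl ⟨⟨1, by omega⟩, ⟨2, by omega⟩, by simp, rfl⟩)
      have e02 : ({Sum.inr ⟨0, by omega⟩, Sum.inr ⟨2, by omega⟩} : Set (Fin n ⊕ Fin m)) ∈
          dumbbell n m := Or.inr (Or.inl ⟨⟨0, by omega⟩, ⟨2, by omega⟩, by simp, rfl⟩)
      exact no_triangle_cross (tri _ _ e01) (tri _ _ e12) (tri _ _ e02)
        (π.symm.injective.ne (by simp)) (π.symm.injective.ne (by simp))
        (π.symm.injective.ne (by simp))
  · -- k = 2 : big facet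
    apply not_iso_of_big
    rw [h2]
    rcases le_max_iff.mp h3 with hn3 | hm3
    · exact ⟨Set.range Sum.inl, by simp, by rw [ncard_range_inl]; omega⟩
    · exact ⟨Set.range Sum.inr, by simp, by rw [ncard_range_inr]; omega⟩
end

section
/- Let n ≥ 2, m ≥ 1, and let G = S_{n,m} be the complete split graph on V = A ∪ B, viewed as the simplicial complex Δ(G). Then the facet family of δ_NF(Δ(G)) is exactly { B } ∪ { {x_1}, …, {x_n} }. -/
/-- The complete split graph `S_{n,m}` as a family of edges (facets) on the
vertex set `Fin n ⊕ Fin m`: all pairs inside the clique `A = range Sum.inl`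
together with all cross pairs to the independent set `B = range Sum.inr`. -/
def splitGraph (n m : ℕ) : Set (Set (Fin n ⊕ Fin m)) :=
  {e | (∃ i j : Fin n, i ≠ j ∧ e = {Sum.inl i, Sum.inl j}) ∨
       (∃ (i : Fin n) (j : Fin m), e = {Sum.inl i, Sum.inr j})}

lemma isVC_iff (n m : ℕ) (C : Set (Fin n ⊕ Fin m)) :
    IsVC (splitGraph n m) C ↔
      (∀ i j : Fin n, i ≠ j → Sum.inl i ∈ C ∨ Sum.inl j ∈ C) ∧
      (∀ (i : Fin n) (j : Fin m), Sum.inl i ∈ C ∨ Sum.inr j ∈ C) := by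
  constructor
  · intro h
    constructor
    · intro i j hij
      obtain ⟨v, hvC, hve⟩ := h {Sum.inl i, Sum.inl j} (Or.inl ⟨i, j, hij, rfl⟩)
      rcases hve with h1 | h1 <;> subst h1 <;> tauto
    · intro i j
      obtain ⟨v, hvC, hve⟩ := h {Sum.inl i, Sum.inr j} (Or.inr ⟨i, j, rfl⟩)
      rcases hve with h1 | h1 <;> subst h1 <;> tauto
  · rintro ⟨h1, h2⟩ e (⟨i, j, hij, rfl⟩ | ⟨i, j, rfl⟩)
    · rcases h1 i j hij with h | h
      · exact ⟨Sum.inl i, h, Or.inl rfl⟩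
      · exact ⟨Sum.inl j, h, Or.inr rfl⟩
    · rcases h2 i j with h | h
      · exact ⟨Sum.inl i, h, Or.inl rfl⟩
      · exact ⟨Sum.inr j, h, Or.inr rfl⟩

lemma minVC_iff (n m : ℕ) (hn : 2 ≤ n) (hm : 1 ≤ m) (C : Set (Fin n ⊕ Fin m)) :
    IsMinVC (splitGraph n m) C ↔
      C = Set.range Sum.inl ∨ ∃ i : Fin n, C = {Sum.inl i}ᶜ := by
  have hAvc : IsVC (splitGraph n m) (Set.range Sum.inl) := by
    rw [isVC_iff]
    exact ⟨fun i j _ => Or.inl ⟨i, rfl⟩, fun i j => Or.inl ⟨i, rfl⟩⟩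
  have j0 : Fin m := ⟨0, hm⟩
  constructor
  · rintro ⟨hvc, hmin⟩
    rw [isVC_iff] at hvc
    obtain ⟨h1, h2⟩ := hvc
    by_cases hA : Set.range Sum.inl ⊆ C
    · left
      by_contra hne
      exact hmin (Set.range Sum.inl) (ssubset_of_subset_of_ne hA (Ne.symm hne)) hAvc
    · right
      obtain ⟨v, ⟨i, rfl⟩, hvC⟩ := Set.not_subset.mp hA
      refine ⟨i, ?_⟩
      apply Set.eq_of_subset_of_subset
      · intro v hv
        simp only [Set.mem_compl_iff, Set.mem_singleton_iff]
        rintro rfl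
        exact hvC hv
      · rintro (⟨j⟩ | ⟨j⟩) hv
        · have hij : i ≠ j := by
            rintro rfl
            exact hv rfl
          rcases h1 i j hij with h | h
          · exact absurd h hvC
          · exact h
        · rcases h2 i j with h | h
          · exact absurd h hvC
          · exact h
  · rintro (rfl | ⟨i, rfl⟩)
    · refine ⟨hAvc, ?_⟩
      rintro D hD hDvc
      obtain ⟨v, hvA, hvD⟩ := Set.exists_of_ssubset hD
      obtain ⟨i, rfl⟩ := hvA
      rw [isVC_iff] at hDvc
      rcases hDvc.2 i j0 with h | h
      · exact hvD h
      · have := hD.1 h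
        obtain ⟨k, hk⟩ := this
        exact absurd hk (by simp)
    · constructor
      · rw [isVC_iff]
        constructor
        · intro a b hab
          by_cases ha : a = i
          · subst ha
            right
            simpa using (Ne.symm hab)
          · left
            simpa using ha
        · intro a b
          right
          simp
      · rintro D hD hDvc
        obtain ⟨v, hvC, hvD⟩ := Set.exists_of_ssubset hD
        have hiD : Sum.inl i ∉ D := fun h => (hD.1 h) rfl
        rw [isVC_iff] at hDvc
        rcases v with j | j
        · have hij : i ≠ j := fun h => hvC (by simp [h])
          rcases hDvc.1 i j hij with h | h
          · exact hiD h
          · exact hvD h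
        · rcases hDvc.2 i j with h | h
          · exact hiD h
          · exact hvD h

/-- For `n ≥ 2`, `m ≥ 1`, the facet family of `δ_NF(Δ(S_{n,m}))` is exactly
`{B} ∪ {{x₁}, …, {xₙ}}`. -/
theorem splitGraph_nf_one (n m : ℕ) (hn : 2 ≤ n) (hm : 1 ≤ m) :
    nf (splitGraph n m) =
      {Set.range Sum.inr} ∪
      {e : Set (Fin n ⊕ Fin m) | ∃ i : Fin n, e = {Sum.inl i}} := by
  ext S
  simp only [nf, Set.mem_setOf_eq, Set.mem_union, Set.mem_singleton_iff]
  constructor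
  · rintro ⟨C, hC, rfl⟩
    rw [minVC_iff n m hn hm] at hC
    rcases hC with rfl | ⟨i, rfl⟩
    · left
      exact Set.compl_range_inl
    · right
      exact ⟨i, compl_compl _⟩
  · rintro (rfl | ⟨i, rfl⟩)
    · exact ⟨Set.range Sum.inl, (minVC_iff n m hn hm _).mpr (Or.inl rfl),
        Set.compl_range_inl.symm⟩
    · exact ⟨{Sum.inl i}ᶜ, (minVC_iff n m hn hm _).mpr (Or.inr ⟨i, rfl⟩),
        (compl_compl _).symm⟩
end

section
/- Let n ≥ 2, m ≥ 1, and let G = S_{n,m} be the complete split graph on V = A ∪ B, viewed as the simplicial complex Δ(G). Then the facet family of δ_NF^(2)(Δ(G)) is exactly { B ∖ {y_j} : j = 1, …, m }. -/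
open Set

lemma isVC_mono {V : Type*} {F : Set (Set V)} {C D : Set V}
    (h : C ⊆ D) (hC : IsVC F C) : IsVC F D := fun f hf =>
  (hC f hf).mono (Set.inter_subset_inter_left f h)

lemma minVC_eq {V : Type*} {F : Set (Set V)} {C S : Set V}
    (hmin : IsMinVC F C) (hS : IsVC F S) (hsub : S ⊆ C) : C = S := by
  by_contra h
  exact hmin.2 S (HasSubset.Subset.ssubset_of_ne hsub fun hSC => h hSC.symm) hS

lemma pair_inter {V : Type*} (C : Set V) (a b : V) :
    (C ∩ {a, b}).Nonempty ↔ a ∈ C ∨ b ∈ C := by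
  constructor
  · rintro ⟨x, hxC, (rfl | rfl)⟩
    · exact Or.inl hxC
    · exact Or.inr hxC
  · rintro (h | h)
    · exact ⟨a, h, by simp⟩
    · exact ⟨b, h, by simp⟩

lemma vc_split_iff {n m : ℕ} {C : Set (Fin n ⊕ Fin m)} :
    IsVC (splitGraph n m) C ↔
      (∀ i j : Fin n, i ≠ j → Sum.inl i ∈ C ∨ Sum.inl j ∈ C) ∧
      (∀ (i : Fin n) (j : Fin m), Sum.inl i ∈ C ∨ Sum.inr j ∈ C) := by
  constructor
  · intro h
    constructor
    · intro i j hij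
      exact (pair_inter C _ _).1 (h _ (Or.inl ⟨i, j, hij, rfl⟩))
    · intro i j
      exact (pair_inter C _ _).1 (h _ (Or.inr ⟨i, j, rfl⟩))
  · rintro ⟨h1, h2⟩ f (⟨i, j, hij, rfl⟩ | ⟨i, j, rfl⟩)
    · exact (pair_inter C _ _).2 (h1 i j hij)
    · exact (pair_inter C _ _).2 (h2 i j)

lemma vc_rangeInl {n m : ℕ} :
    IsVC (splitGraph n m) (Set.range (Sum.inl : Fin n → Fin n ⊕ Fin m)) := by
  rw [vc_split_iff]
  exact ⟨fun i j _ => Or.inl ⟨i, rfl⟩, fun i j => Or.inl ⟨i, rfl⟩⟩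

lemma vc_complSingle {n m : ℕ} (hn : 2 ≤ n) (i : Fin n) :
    IsVC (splitGraph n m) ({Sum.inl i}ᶜ : Set (Fin n ⊕ Fin m)) := by
  rw [vc_split_iff]
  constructor
  · intro a b hab
    rcases eq_or_ne a i with rfl | ha
    · exact Or.inr (by simpa using hab.symm)
    · exact Or.inl (by simpa using ha)
  · intro a j
    exact Or.inr (by simp)

lemma minVC_split {n m : ℕ} (hn : 2 ≤ n) (hm : 1 ≤ m) {C : Set (Fin n ⊕ Fin m)} :
    IsMinVC (splitGraph n m) C ↔
      C = Set.range Sum.inl ∨ ∃ i : Fin n, C = {Sum.inl i}ᶜ := by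
  constructor
  · intro hmin
    obtain ⟨h1, h2⟩ := vc_split_iff.1 hmin.1
    by_cases hall : ∀ i : Fin n, Sum.inl i ∈ C
    · left
      refine minVC_eq hmin vc_rangeInl ?_
      rintro x ⟨i, rfl⟩
      exact hall i
    · push_neg at hall
      obtain ⟨i, hi⟩ := hall
      right
      refine ⟨i, minVC_eq hmin (vc_complSingle hn i) ?_⟩
      rintro (a | b) hx
      · refine (h1 i a ?_).resolve_left hi
        intro h; subst h; exact hx rfl
      · exact (h2 i b).resolve_left hi
  · rintro (rfl | ⟨i, rfl⟩)
    · refine ⟨vc_rangeInl, fun D hD hDvc => ?_⟩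
      obtain ⟨x, hxC, hxD⟩ := Set.exists_of_ssubset hD
      obtain ⟨i, rfl⟩ := hxC
      obtain ⟨j, hj⟩ : ∃ j : Fin m, True := ⟨⟨0, hm⟩, trivial⟩
      obtain ⟨y, hyD, hy⟩ := hDvc _ (Or.inr ⟨i, j, rfl⟩)
      rcases hy with rfl | rfl
      · exact hxD hyD
      · obtain ⟨k, hk⟩ := hD.1 hyD
        exact Sum.inl_ne_inr hk
    · refine ⟨vc_complSingle hn i, fun D hD hDvc => ?_⟩
      obtain ⟨x, hxC, hxD⟩ := Set.exists_of_ssubset hD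
      rcases x with a | b
      · have hai : a ≠ i := fun h => hxC (by simp [h])
        obtain ⟨y, hyD, hy⟩ := hDvc _ (Or.inl ⟨i, a, hai.symm, rfl⟩)
        rcases hy with rfl | rfl
        · exact (hD.1 hyD) rfl
        · exact hxD hyD
      · obtain ⟨y, hyD, hy⟩ := hDvc _ (Or.inr ⟨i, b, rfl⟩)
        rcases hy with rfl | rfl
        · exact (hD.1 hyD) rfl
        · exact hxD hyD

lemma nf_split {n m : ℕ} (hn : 2 ≤ n) (hm : 1 ≤ m) :
    nf (splitGraph n m) =
      insert (Set.range (Sum.inr : Fin m → Fin n ⊕ Fin m))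
        {S | ∃ i : Fin n, S = {Sum.inl i}} := by
  ext S
  simp only [nf, Set.mem_setOf_eq, Set.mem_insert_iff]
  constructor
  · rintro ⟨C, hmin, rfl⟩
    rcases (minVC_split hn hm).1 hmin with rfl | ⟨i, rfl⟩
    · left; exact Set.compl_range_inl
    · right; exact ⟨i, compl_compl _⟩
  · rintro (rfl | ⟨i, rfl⟩)
    · exact ⟨Set.range Sum.inl, (minVC_split hn hm).2 (Or.inl rfl),
        Set.compl_range_inl.symm⟩
    · exact ⟨{Sum.inl i}ᶜ, (minVC_split hn hm).2 (Or.inr ⟨i, rfl⟩),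
        (compl_compl _).symm⟩

lemma vc_step2 {n m : ℕ} (j : Fin m) :
    IsVC (insert (Set.range (Sum.inr : Fin m → Fin n ⊕ Fin m))
        {S | ∃ i : Fin n, S = {Sum.inl i}})
      (insert (Sum.inr j) (Set.range Sum.inl)) := by
  rintro f (rfl | ⟨i, rfl⟩)
  · exact ⟨Sum.inr j, Or.inl rfl, j, rfl⟩
  · exact ⟨Sum.inl i, Or.inr ⟨i, rfl⟩, rfl⟩

lemma minVC_step2 {n m : ℕ} {C : Set (Fin n ⊕ Fin m)} :
    IsMinVC (insert (Set.range (Sum.inr : Fin m → Fin n ⊕ Fin m))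
        {S | ∃ i : Fin n, S = {Sum.inl i}}) C ↔
      ∃ j : Fin m, C = insert (Sum.inr j) (Set.range Sum.inl) := by
  constructor
  · intro hmin
    obtain ⟨y, hyC, hy⟩ := hmin.1 _ (Or.inl rfl)
    obtain ⟨j, rfl⟩ := hy
    refine ⟨j, minVC_eq hmin (vc_step2 j) ?_⟩
    rintro x (rfl | ⟨i, rfl⟩)
    · exact hyC
    · obtain ⟨z, hzC, hz⟩ := hmin.1 {Sum.inl i} (Or.inr ⟨i, rfl⟩)
      rwa [hz] at hzC
  · rintro ⟨j, rfl⟩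
    refine ⟨vc_step2 j, fun D hD hDvc => ?_⟩
    obtain ⟨x, hxC, hxD⟩ := Set.exists_of_ssubset hD
    rcases hxC with rfl | ⟨i, rfl⟩
    · obtain ⟨y, hyD, k, hk⟩ := hDvc _ (Or.inl rfl)
      subst hk
      rcases hD.1 hyD with h | ⟨i, hi⟩
      · rw [← h] at hxD; exact hxD hyD
      · exact Sum.inl_ne_inr hi
    · obtain ⟨y, hyD, hy⟩ := hDvc {Sum.inl i} (Or.inr ⟨i, rfl⟩)
      rw [hy] at hyD
      exact hxD hyD

/-- For `n ≥ 2`, `m ≥ 1`, the facet family of `δ_NF^(2)(Δ(S_{n,m}))` is exactly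
`{ B ∖ {yⱼ} : j = 1, …, m }`. -/
theorem splitGraph_nf_two (n m : ℕ) (hn : 2 ≤ n) (hm : 1 ≤ m) :
    nf^[2] (splitGraph n m) =
      {e : Set (Fin n ⊕ Fin m) | ∃ j : Fin m,
        e = Set.range Sum.inr \ {Sum.inr j}} := by
  show nf (nf (splitGraph n m)) = _
  rw [nf_split hn hm]
  ext S
  simp only [nf, Set.mem_setOf_eq]
  constructor
  · rintro ⟨C, hmin, rfl⟩
    obtain ⟨j, rfl⟩ := minVC_step2.1 hmin
    refine ⟨j, ?_⟩
    ext (a | b) <;> simp [eq_comm]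
  · rintro ⟨j, rfl⟩
    refine ⟨insert (Sum.inr j) (Set.range Sum.inl), minVC_step2.2 ⟨j, rfl⟩, ?_⟩
    ext (a | b) <;> simp [eq_comm]
end

section
/- Let Δ be a simplicial complex on V = A ∪ B that is invariant under 𝔖_A × 𝔖_B, and let α(Δ) ⊆ P denote its facet-type antichain (the set of types of facets of Δ). Then the facet-type antichain of δ_NF(Δ) is α(δ_NF(Δ)) = ς(ρ(ς(α(Δ)))). -/
/-- The type of a subset of `Fin n ⊕ Fin m`: the pair
`(|F ∩ A|, |F ∩ B|)` where `A = range Sum.inl` and `B = range Sum.inr`. -/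
noncomputable def typeOf {n m : ℕ} (S : Set (Fin n ⊕ Fin m)) : ℕ × ℕ :=
  ((S ∩ Set.range Sum.inl).ncard, (S ∩ Set.range Sum.inr).ncard)

/-- A family of subsets of `Fin n ⊕ Fin m` is invariant under `𝔖_A × 𝔖_B` if
every permutation acting separately on `A` and `B` maps it onto itself. -/
def InvariantAB {n m : ℕ} (F : Set (Set (Fin n ⊕ Fin m))) : Prop :=
  ∀ (σ : Equiv.Perm (Fin n)) (τ : Equiv.Perm (Fin m)),
    (fun S : Set (Fin n ⊕ Fin m) => (Equiv.sumCongr σ τ) '' S) '' F = F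

/-- The grid poset `P = [0,n] × [0,m]` (inside `ℕ × ℕ` with the componentwise
order). -/
def Pgrid (n m : ℕ) : Set (ℕ × ℕ) := Set.Iic (n, m)

/-- The order ideal `I(ψ)` generated by `ψ`. -/
def orderIdeal (ψ : Set (ℕ × ℕ)) : Set (ℕ × ℕ) := {u | ∃ v ∈ ψ, u ≤ v}

/-- Rowmotion `ρ(ψ)`: the minimal elements of `P ∖ I(ψ)`. -/
def rowmotion (n m : ℕ) (ψ : Set (ℕ × ℕ)) : Set (ℕ × ℕ) :=
  {u | u ∈ Pgrid n m \ orderIdeal ψ ∧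
       ∀ v ∈ Pgrid n m \ orderIdeal ψ, v ≤ u → v = u}

/-- The involution `ς(a, b) = (n − a, m − b)` of `P`. -/
def sigmaMap (n m : ℕ) (p : ℕ × ℕ) : ℕ × ℕ := (n - p.1, m - p.2)


open Set

section Aux
variable {n m : ℕ}

/-- A permutation realizing equal-cardinality subsets of `Fin k`. -/
lemma perm_of_ncard_eq {k : ℕ} {X Y : Set (Fin k)} (h : X.ncard = Y.ncard) :
    ∃ σ : Equiv.Perm (Fin k), σ '' X = Y := by
  classical
  have h1 : Nat.card X = Nat.card Y := by
    rw [Nat.card_coe_set_eq, Nat.card_coe_set_eq, h]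
  have hXc : Xᶜ.ncard = Yᶜ.ncard := by
    have hx : Xᶜ.ncard = (univ : Set (Fin k)).ncard - X.ncard := by
      rw [← Set.ncard_diff (subset_univ X), compl_eq_univ_diff]
    have hy : Yᶜ.ncard = (univ : Set (Fin k)).ncard - Y.ncard := by
      rw [← Set.ncard_diff (subset_univ Y), compl_eq_univ_diff]
    rw [hx, hy, h]
  have h2 : Nat.card ↥Xᶜ = Nat.card ↥Yᶜ := by
    rw [Nat.card_coe_set_eq, Nat.card_coe_set_eq, hXc]
  obtain ⟨e⟩ := Finite.card_eq.mp h1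
  obtain ⟨e'⟩ := Finite.card_eq.mp h2
  obtain ⟨σ, hσ⟩ := (Equiv.Set.compl e).symm e'
  refine ⟨σ, ?_⟩
  ext y
  constructor
  · rintro ⟨x, hx, rfl⟩
    rw [hσ ⟨x, hx⟩]
    exact (e ⟨x, hx⟩).2
  · intro hy
    refine ⟨e.symm ⟨y, hy⟩, (e.symm ⟨y, hy⟩).2, ?_⟩
    rw [hσ (e.symm ⟨y, hy⟩)]
    simp

lemma typeOf_fst (S : Set (Fin n ⊕ Fin m)) :
    (typeOf S).1 = (Sum.inl ⁻¹' S : Set (Fin n)).ncard := by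
  have : S ∩ Set.range Sum.inl = Sum.inl '' (Sum.inl ⁻¹' S) := by
    rw [Set.image_preimage_eq_inter_range]
  rw [typeOf, this, Set.ncard_image_of_injective _ Sum.inl_injective]

lemma typeOf_snd (S : Set (Fin n ⊕ Fin m)) :
    (typeOf S).2 = (Sum.inr ⁻¹' S : Set (Fin m)).ncard := by
  have : S ∩ Set.range Sum.inr = Sum.inr '' (Sum.inr ⁻¹' S) := by
    rw [Set.image_preimage_eq_inter_range]
  rw [typeOf, this, Set.ncard_image_of_injective _ Sum.inr_injective]

/-- Two sets of the same type are related by a `𝔖_A × 𝔖_B` permutation. -/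
lemma exists_perm_of_typeOf_eq {S S' : Set (Fin n ⊕ Fin m)}
    (h : typeOf S = typeOf S') :
    ∃ (σ : Equiv.Perm (Fin n)) (τ : Equiv.Perm (Fin m)),
      (Equiv.sumCongr σ τ) '' S = S' := by
  have h1 : (Sum.inl ⁻¹' S : Set (Fin n)).ncard = (Sum.inl ⁻¹' S').ncard := by
    rw [← typeOf_fst, ← typeOf_fst, h]
  have h2 : (Sum.inr ⁻¹' S : Set (Fin m)).ncard = (Sum.inr ⁻¹' S').ncard := by
    rw [← typeOf_snd, ← typeOf_snd, h]
  obtain ⟨σ, hσ⟩ := perm_of_ncard_eq h1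
  obtain ⟨τ, hτ⟩ := perm_of_ncard_eq h2
  refine ⟨σ, τ, ?_⟩
  ext z
  rw [Set.mem_image_equiv]
  cases z with
  | inl a =>
      have : a ∈ σ '' (Sum.inl ⁻¹' S) ↔ Sum.inl a ∈ S' := by rw [hσ]; rfl
      rw [← this, Equiv.image_eq_preimage_symm]
      rfl
  | inr b =>
      have : b ∈ τ '' (Sum.inr ⁻¹' S) ↔ Sum.inr b ∈ S' := by rw [hτ]; rfl
      rw [← this, Equiv.image_eq_preimage_symm]
      rfl

end Aux
section Aux2
variable {n m : ℕ}

lemma typeOf_mem_Pgrid (S : Set (Fin n ⊕ Fin m)) : typeOf S ∈ Pgrid n m := by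
  constructor
  · rw [typeOf_fst]
    calc (Sum.inl ⁻¹' S : Set (Fin n)).ncard ≤ (univ : Set (Fin n)).ncard :=
          Set.ncard_le_ncard (subset_univ _)
      _ = n := by rw [Set.ncard_univ, Nat.card_eq_fintype_card, Fintype.card_fin]
  · rw [typeOf_snd]
    calc (Sum.inr ⁻¹' S : Set (Fin m)).ncard ≤ (univ : Set (Fin m)).ncard :=
          Set.ncard_le_ncard (subset_univ _)
      _ = m := by rw [Set.ncard_univ, Nat.card_eq_fintype_card, Fintype.card_fin]

lemma typeOf_compl (S : Set (Fin n ⊕ Fin m)) :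
    typeOf Sᶜ = sigmaMap n m (typeOf S) := by
  have hu1 : (univ : Set (Fin n)).ncard = n := by
    rw [Set.ncard_univ, Nat.card_eq_fintype_card, Fintype.card_fin]
  have hu2 : (univ : Set (Fin m)).ncard = m := by
    rw [Set.ncard_univ, Nat.card_eq_fintype_card, Fintype.card_fin]
  have e1 : (Sum.inl ⁻¹' Sᶜ : Set (Fin n)) = (Sum.inl ⁻¹' S)ᶜ := rfl
  have e2 : (Sum.inr ⁻¹' Sᶜ : Set (Fin m)) = (Sum.inr ⁻¹' S)ᶜ := rfl
  have c1 : ((Sum.inl ⁻¹' S : Set (Fin n))ᶜ).ncard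
      = n - (Sum.inl ⁻¹' S : Set (Fin n)).ncard := by
    rw [compl_eq_univ_diff, Set.ncard_diff (subset_univ _), hu1]
  have c2 : ((Sum.inr ⁻¹' S : Set (Fin m))ᶜ).ncard
      = m - (Sum.inr ⁻¹' S : Set (Fin m)).ncard := by
    rw [compl_eq_univ_diff, Set.ncard_diff (subset_univ _), hu2]
  have := typeOf_fst Sᶜ
  have := typeOf_snd Sᶜ
  apply Prod.ext
  · rw [typeOf_fst, e1, c1, sigmaMap, typeOf_fst]
  · rw [typeOf_snd, e2, c2, sigmaMap, typeOf_snd]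

lemma typeOf_mono {D C : Set (Fin n ⊕ Fin m)} (h : D ⊆ C) :
    typeOf D ≤ typeOf C := by
  constructor
  · rw [typeOf_fst, typeOf_fst]
    exact Set.ncard_le_ncard (fun x hx => h hx)
  · rw [typeOf_snd, typeOf_snd]
    exact Set.ncard_le_ncard (fun x hx => h hx)

lemma eq_of_subset_of_typeOf_eq {D C : Set (Fin n ⊕ Fin m)} (h : D ⊆ C)
    (ht : typeOf D = typeOf C) : D = C := by
  have h1 : (Sum.inl ⁻¹' D : Set (Fin n)) = Sum.inl ⁻¹' C :=
    Set.eq_of_subset_of_ncard_le (fun x hx => h hx)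
      (le_of_eq (by rw [← typeOf_fst, ← typeOf_fst, ht])) (Set.toFinite _)
  have h2 : (Sum.inr ⁻¹' D : Set (Fin m)) = Sum.inr ⁻¹' C :=
    Set.eq_of_subset_of_ncard_le (fun x hx => h hx)
      (le_of_eq (by rw [← typeOf_snd, ← typeOf_snd, ht])) (Set.toFinite _)
  ext z
  cases z with
  | inl a => rw [← Set.mem_preimage, ← Set.mem_preimage, h1]
  | inr b => rw [← Set.mem_preimage, ← Set.mem_preimage, h2]

/-- Any type below `typeOf C` is realized by a subset of `C`. -/
lemma exists_subset_typeOf {C : Set (Fin n ⊕ Fin m)} {t : ℕ × ℕ}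
    (h : t ≤ typeOf C) : ∃ D, D ⊆ C ∧ typeOf D = t := by
  obtain ⟨X, hX1, hX2⟩ := Set.exists_subset_card_eq (typeOf_fst C ▸ h.1 :
    t.1 ≤ (Sum.inl ⁻¹' C : Set (Fin n)).ncard)
  obtain ⟨Y, hY1, hY2⟩ := Set.exists_subset_card_eq (typeOf_snd C ▸ h.2 :
    t.2 ≤ (Sum.inr ⁻¹' C : Set (Fin m)).ncard)
  refine ⟨Sum.inl '' X ∪ Sum.inr '' Y, ?_, ?_⟩
  · rintro z (⟨a, ha, rfl⟩ | ⟨b, hb, rfl⟩)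
    · exact hX1 ha
    · exact hY1 hb
  · have p1 : (Sum.inl ⁻¹' (Sum.inl '' X ∪ Sum.inr '' Y) : Set (Fin n)) = X := by
      ext a
      simp [Sum.inl_injective.eq_iff]
    have p2 : (Sum.inr ⁻¹' (Sum.inl '' X ∪ Sum.inr '' Y) : Set (Fin m)) = Y := by
      ext b
      simp [Sum.inr_injective.eq_iff]
    apply Prod.ext
    · rw [typeOf_fst, p1, hX2]
    · rw [typeOf_snd, p2, hY2]

lemma typeOf_univ : typeOf (univ : Set (Fin n ⊕ Fin m)) = (n, m) := by
  apply Prod.ext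
  · rw [typeOf_fst]
    show (univ : Set (Fin n)).ncard = n
    rw [Set.ncard_univ, Nat.card_eq_fintype_card, Fintype.card_fin]
  · rw [typeOf_snd]
    show (univ : Set (Fin m)).ncard = m
    rw [Set.ncard_univ, Nat.card_eq_fintype_card, Fintype.card_fin]

lemma sigmaMap_antitone {p q : ℕ × ℕ} (h : p ≤ q) :
    sigmaMap n m q ≤ sigmaMap n m p :=
  ⟨Nat.sub_le_sub_left h.1 n, Nat.sub_le_sub_left h.2 m⟩

lemma sigmaMap_sigmaMap {p : ℕ × ℕ} (h : p ∈ Pgrid n m) :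
    sigmaMap n m (sigmaMap n m p) = p := by
  obtain ⟨h1, h2⟩ := h
  exact Prod.ext (Nat.sub_sub_self h1) (Nat.sub_sub_self h2)

lemma sigmaMap_mem_Pgrid (p : ℕ × ℕ) : sigmaMap n m p ∈ Pgrid n m :=
  ⟨Nat.sub_le _ _, Nat.sub_le _ _⟩

/-- Invariant families are unions of full type classes. -/
lemma mem_of_typeOf_eq {F : Set (Set (Fin n ⊕ Fin m))} (hinv : InvariantAB F)
    {S S' : Set (Fin n ⊕ Fin m)} (hS : S ∈ F) (h : typeOf S = typeOf S') :
    S' ∈ F := by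
  obtain ⟨σ, τ, hστ⟩ := exists_perm_of_typeOf_eq h
  rw [← hinv σ τ]
  exact ⟨S, hS, hστ⟩

end Aux2
section Main
variable {n m : ℕ}

lemma isVC_iff_s16 {F : Set (Set (Fin n ⊕ Fin m))} (hinv : InvariantAB F)
    (C : Set (Fin n ⊕ Fin m)) :
    IsVC F C ↔ typeOf C ∉ orderIdeal (sigmaMap n m '' (typeOf '' F)) := by
  constructor
  · intro hvc hmem
    obtain ⟨v, ⟨t, ⟨f, hf, rfl⟩, rfl⟩, hle⟩ := hmem
    -- typeOf C ≤ ς (typeOf f); hence typeOf f ≤ typeOf Cᶜ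
    have hf' : typeOf f ≤ typeOf Cᶜ := by
      rw [typeOf_compl]
      have := sigmaMap_antitone (n := n) (m := m) hle
      rwa [sigmaMap_sigmaMap (typeOf_mem_Pgrid f)] at this
    obtain ⟨D, hD1, hD2⟩ := exists_subset_typeOf hf'
    have hDF : D ∈ F := mem_of_typeOf_eq hinv hf hD2.symm
    obtain ⟨z, hz1, hz2⟩ := hvc D hDF
    exact (hD1 hz2) hz1
  · intro hni f hf
    by_contra hne
    have hsub : f ⊆ Cᶜ := fun z hz hzC => hne ⟨z, hzC, hz⟩
    have h1 : typeOf f ≤ sigmaMap n m (typeOf C) := by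
      rw [← typeOf_compl]; exact typeOf_mono hsub
    have h2 : typeOf C ≤ sigmaMap n m (typeOf f) := by
      have := sigmaMap_antitone (n := n) (m := m) h1
      rwa [sigmaMap_sigmaMap (typeOf_mem_Pgrid C)] at this
    exact hni ⟨sigmaMap n m (typeOf f), ⟨typeOf f, ⟨f, hf, rfl⟩, rfl⟩, h2⟩

lemma isMinVC_iff_s16 {F : Set (Set (Fin n ⊕ Fin m))} (hinv : InvariantAB F)
    (C : Set (Fin n ⊕ Fin m)) :
    IsMinVC F C ↔
      typeOf C ∈ rowmotion n m (sigmaMap n m '' (typeOf '' F)) := by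
  constructor
  · rintro ⟨hvc, hmin⟩
    refine ⟨⟨typeOf_mem_Pgrid C, (isVC_iff_s16 hinv C).mp hvc⟩, ?_⟩
    rintro v ⟨hvP, hvI⟩ hle
    obtain ⟨D, hD1, hD2⟩ := exists_subset_typeOf (C := C) hle
    have hDvc : IsVC F D := (isVC_iff_s16 hinv D).mpr (by rw [hD2]; exact hvI)
    by_contra hne
    have : D ⊂ C := by
      refine ⟨hD1, fun hCD => ?_⟩
      have : D = C := Set.Subset.antisymm hD1 hCD
      exact hne (by rw [← hD2, this])
    exact hmin D this hDvc
  · rintro ⟨⟨hP, hI⟩, hmin⟩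
    refine ⟨(isVC_iff_s16 hinv C).mpr hI, ?_⟩
    intro D hD hDvc
    have hle : typeOf D ≤ typeOf C := typeOf_mono hD.1
    have hDI := (isVC_iff_s16 hinv D).mp hDvc
    have := hmin (typeOf D) ⟨typeOf_mem_Pgrid D, hDI⟩ hle
    exact hD.2 (le_of_eq (eq_of_subset_of_typeOf_eq hD.1 this).symm)
end Main
/-- For a `𝔖_A × 𝔖_B`-invariant simplicial complex `Δ` with facet-type
antichain `α(Δ)` (the set of types of facets), the facet-type antichain of
`δ_NF(Δ)` is `ς(ρ(ς(α(Δ))))`. -/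
theorem nf_type_update (n m : ℕ)
    (F : Set (Set (Fin n ⊕ Fin m)))
    (hac : IsAntichain (· ⊆ ·) F) (hinv : InvariantAB F) :
    typeOf '' nf F =
      sigmaMap n m '' rowmotion n m (sigmaMap n m '' (typeOf '' F)) := by
  ext u
  constructor
  · rintro ⟨S, ⟨C, hC, rfl⟩, rfl⟩
    exact ⟨typeOf C, (isMinVC_iff_s16 hinv C).mp hC, (typeOf_compl C).symm⟩
  · rintro ⟨v, hv, rfl⟩
    obtain ⟨C, -, hC⟩ := exists_subset_typeOf (C := (univ : Set (Fin n ⊕ Fin m))) (t := v)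
      (by rw [typeOf_univ]; exact hv.1.1)
    exact ⟨Cᶜ, ⟨C, (isMinVC_iff_s16 hinv C).mpr (by rw [hC]; exact hv), rfl⟩,
      by rw [typeOf_compl, hC]⟩
end

section
/- Let n ≥ 2 and m ≥ 1, and let S_{n,m} be the complete split graph on n + m vertices, viewed as the simplicial complex Δ(S_{n,m}). Then the NF-number of S_{n,m} satisfies NF(S_{n,m}) = n + m + 2. -/
/-!
The iterates of `nf` on `S_{n,m}` stay invariant under permutations of `A` and of `B`, so each of
them consists of the sets whose profile `(|S ∩ A|, |S ∩ B|)` lies in a set `T ⊆ [0,n] × [0,m]`.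
Since the facets of `nf F` are the maximal sets containing no facet of `F`, on profiles `nf` sends
`T` to the maximal points of the box lying above no point of `T`. Starting from `{(2,0), (1,1)}`
this gives `{(1,0), (0,m)}`, then `{(0,m-1)}`, then the staircase with parameter `n + m`, and each
further step lowers the parameter by one, reaching `{(2,0), (1,1)}` again after `n + m + 2` steps.
No earlier iterate is a graph without isolated vertices: it has a facet of size `≠ 2` or leaves
`A` or `B` uncovered.
-/

open Set

theorem isVC_iff_forall_not_subset_compl {V : Type*} {F : Set (Set V)} {C : Set V} :
    IsVC F C ↔ ∀ f ∈ F, ¬ f ⊆ Cᶜ := by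
  simp only [IsVC, subset_compl_iff_disjoint_left, not_disjoint_iff_nonempty_inter]

theorem mem_nf_iff_maximal {V : Type*} {F : Set (Set V)} {S : Set V} :
    S ∈ nf F ↔ Maximal (fun I ↦ ∀ f ∈ F, ¬ f ⊆ I) S := by
  have : S ∈ nf F ↔ IsMinVC F Sᶜ :=
    ⟨fun ⟨C, hC, hS⟩ ↦ by rwa [hS, compl_compl], fun h ↦ ⟨Sᶜ, h, (compl_compl S).symm⟩⟩
  rw [this, IsMinVC, maximal_iff_forall_gt, isVC_iff_forall_not_subset_compl, compl_compl]
  refine and_congr_right' ⟨fun h I hSI hI ↦ ?_, fun h D hD hVC ↦ ?_⟩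
  · refine h Iᶜ (compl_lt_compl_iff_lt.2 hSI) ?_
    rwa [isVC_iff_forall_not_subset_compl, compl_compl]
  · rw [isVC_iff_forall_not_subset_compl] at hVC
    exact h (by simpa using compl_lt_compl_iff_lt.2 hD) hVC

theorem IsIsoC.forall_ncard_eq {V : Type*} {F G : Set (Set V)} (h : IsIsoC F G) {k : ℕ}
    (hG : ∀ g ∈ G, g.ncard = k) : ∀ f ∈ F, f.ncard = k := by
  obtain ⟨π, hπ⟩ := h
  intro f hf
  rw [← hG _ ((hπ f).1 hf), ncard_image_of_injective _ π.injective]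

theorem IsIsoC.sUnion_eq_univ {V : Type*} {F G : Set (Set V)} (h : IsIsoC F G)
    (hG : ⋃₀ G = univ) : ⋃₀ F = univ := by
  obtain ⟨π, hπ⟩ := h
  refine eq_univ_of_forall fun v ↦ ?_
  obtain ⟨g, hg, hvg⟩ := mem_sUnion.1 (hG ▸ mem_univ (π v))
  exact ⟨π ⁻¹' g, (hπ _).2 (by rwa [image_preimage_eq _ π.surjective]), hvg⟩

def profileNF (top : ℕ × ℕ) (T : Set (ℕ × ℕ)) : Set (ℕ × ℕ) :=
  {x | Maximal (fun y ↦ y ≤ top ∧ ∀ t ∈ T, ¬ t ≤ y) x}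

theorem profileNF_eq_of_isAntichain {top : ℕ × ℕ} {T A : Set (ℕ × ℕ)}
    (hA : IsAntichain (· ≤ ·) A) (hTA : ∀ y, (y ≤ top ∧ ∀ t ∈ T, ¬ t ≤ y) ↔ ∃ a ∈ A, y ≤ a) :
    profileNF top T = A := by
  ext x
  simp only [profileNF, mem_ofPred_eq, hTA, ← mem_lowerClosure]
  exact hA.maximal_mem_lowerClosure_iff_mem

section Profile

variable {α β : Type*}

noncomputable def profile (S : Set (α ⊕ β)) : ℕ × ℕ :=
  ((Sum.inl ⁻¹' S).ncard, (Sum.inr ⁻¹' S).ncard)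

def ofProfiles (T : Set (ℕ × ℕ)) : Set (Set (α ⊕ β)) := profile ⁻¹' T

theorem profile_univ : profile (univ : Set (α ⊕ β)) = (Nat.card α, Nat.card β) := by
  simp [profile]

theorem exists_subsuperset_profile_eq {S D : Set (α ⊕ β)} (hSD : S ⊆ D) {x : ℕ × ℕ}
    (hSx : profile S ≤ x) (hxD : x ≤ profile D) :
    ∃ S', S ⊆ S' ∧ S' ⊆ D ∧ profile S' = x := by
  obtain ⟨U, hSU, hUD, hU⟩ := exists_subsuperset_card_eq (preimage_mono hSD) hSx.1 hxD.1
  obtain ⟨W, hSW, hWD, hW⟩ := exists_subsuperset_card_eq (preimage_mono hSD) hSx.2 hxD.2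
  refine ⟨sumEquiv.symm (U, W), ?_, ?_, ?_⟩
  · exact (sumEquiv.le_symm_apply).2 ⟨hSU, hSW⟩
  · exact (sumEquiv.symm_apply_le).2 ⟨hUD, hWD⟩
  · have := sumEquiv.apply_symm_apply (U, W)
    simp only [sumEquiv_apply, Prod.mk.injEq] at this
    rw [profile, this.1, this.2, hU, hW]

variable [Finite α] [Finite β]

theorem ncard_eq_profile_fst_add_snd (S : Set (α ⊕ β)) :
    S.ncard = (profile S).1 + (profile S).2 := by
  conv_lhs => rw [← image_preimage_inl_union_image_preimage_inr S]
  rw [ncard_union_eq disjoint_image_inl_image_inr, ncard_image_of_injective _ Sum.inl_injective,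
    ncard_image_of_injective _ Sum.inr_injective, profile]

theorem profile_mono : Monotone (profile : Set (α ⊕ β) → ℕ × ℕ) := fun _ _ h ↦
  ⟨ncard_le_ncard (preimage_mono h), ncard_le_ncard (preimage_mono h)⟩

theorem profile_strictMono : StrictMono (profile : Set (α ⊕ β) → ℕ × ℕ) := fun S S' h ↦
  (profile_mono h.le).lt_of_ne fun heq ↦ (ncard_lt_ncard h).ne <| by
    rw [ncard_eq_profile_fst_add_snd, ncard_eq_profile_fst_add_snd, heq]

theorem profile_le_card (S : Set (α ⊕ β)) : profile S ≤ (Nat.card α, Nat.card β) :=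
  ⟨ncard_le_card _, ncard_le_card _⟩

theorem forall_not_subset_iff_forall_not_le_profile {T : Set (ℕ × ℕ)} {S : Set (α ⊕ β)} :
    (∀ f ∈ ofProfiles T, ¬ f ⊆ S) ↔ ∀ t ∈ T, ¬ t ≤ profile S := by
  refine ⟨fun h t ht hle ↦ ?_, fun h f hf hfS ↦ h _ hf (profile_mono hfS)⟩
  obtain ⟨f, -, hfS, hf⟩ :=
    exists_subsuperset_profile_eq (empty_subset S) (by simp [profile, Prod.le_def]) hle
  exact h f (by rwa [ofProfiles, mem_preimage, hf]) hfS

theorem maximal_comp_profile_iff {Q : ℕ × ℕ → Prop}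
    (hQ : ∀ y, Q y → y ≤ (Nat.card α, Nat.card β)) {S : Set (α ⊕ β)} :
    Maximal (fun I ↦ Q (profile I)) S ↔ Maximal Q (profile S) := by
  refine ⟨fun h ↦ ⟨h.prop, fun y hy hle ↦ ?_⟩, fun h ↦ ⟨h.prop, fun S' hS' hSS' ↦ ?_⟩⟩
  · obtain ⟨S', hSS', -, rfl⟩ :=
      exists_subsuperset_profile_eq (subset_univ S) hle (profile_univ ▸ hQ y hy)
    exact profile_mono (h.le_of_ge hy hSS')
  · by_contra hS'S
    exact (profile_strictMono (lt_of_le_not_ge hSS' hS'S)).not_ge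
      (h.le_of_ge hS' (profile_mono hSS'))

theorem nf_ofProfiles (T : Set (ℕ × ℕ)) :
    nf (ofProfiles T : Set (Set (α ⊕ β))) = ofProfiles (profileNF (Nat.card α, Nat.card β) T) := by
  ext S
  have hindep : (fun I : Set (α ⊕ β) ↦ ∀ f ∈ ofProfiles T, ¬ f ⊆ I) =
      fun I ↦ profile I ≤ (Nat.card α, Nat.card β) ∧ ∀ t ∈ T, ¬ t ≤ profile I := by
    ext I
    rw [forall_not_subset_iff_forall_not_le_profile, iff_and_self]
    exact fun _ ↦ profile_le_card I
  rw [mem_nf_iff_maximal, hindep]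
  exact maximal_comp_profile_iff (Q := fun y ↦ y ≤ _ ∧ ∀ t ∈ T, ¬ t ≤ y) fun _ ↦ And.left

/-- Necessary conditions for `ofProfiles T` to be a graph without isolated vertices. -/
def IsGraphProfileSet (top : ℕ × ℕ) (T : Set (ℕ × ℕ)) : Prop :=
  (∀ t ∈ T, t ≤ top → t.1 + t.2 = 2) ∧ (∃ t ∈ T, 0 < t.1) ∧ ∃ t ∈ T, 0 < t.2

theorem IsIsoC.isGraphProfileSet [Nonempty α] [Nonempty β] {T : Set (ℕ × ℕ)}
    {G : Set (Set (α ⊕ β))} (h : IsIsoC (ofProfiles T) G) (hG₂ : ∀ g ∈ G, g.ncard = 2)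
    (hGcover : ⋃₀ G = univ) : IsGraphProfileSet (Nat.card α, Nat.card β) T := by
  have hcover (v : α ⊕ β) : ∃ f ∈ ofProfiles T, v ∈ f :=
    mem_sUnion.1 (h.sUnion_eq_univ hGcover ▸ mem_univ v)
  refine ⟨fun t ht htop ↦ ?_, ?_, ?_⟩
  · obtain ⟨S, -, -, rfl⟩ := exists_subsuperset_profile_eq (empty_subset _)
      (by simp [profile, Prod.le_def]) (profile_univ ▸ htop)
    rw [← ncard_eq_profile_fst_add_snd]
    exact h.forall_ncard_eq hG₂ S ht
  · obtain ⟨f, hf, hvf⟩ := hcover (Sum.inl (Classical.arbitrary α))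
    exact ⟨profile f, hf, (ncard_pos (toFinite _)).2 ⟨_, hvf⟩⟩
  · obtain ⟨f, hf, hvf⟩ := hcover (Sum.inr (Classical.arbitrary β))
    exact ⟨profile f, hf, (ncard_pos (toFinite _)).2 ⟨_, hvf⟩⟩

end Profile

section SplitGraph

variable {n m : ℕ}

theorem profileNF_split (hn : 1 ≤ n) (hm : 1 ≤ m) :
    profileNF (n, m) {(2, 0), (1, 1)} = {(1, 0), (0, m)} := by
  refine profileNF_eq_of_isAntichain ?_ fun ⟨a, b⟩ ↦ ?_
  · simp only [isAntichain_insert, IsAntichain.singleton, mem_singleton_iff, forall_eq,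
      Prod.mk_le_mk, true_and]
    omega
  · simp only [mem_insert_iff, mem_singleton_iff, forall_eq_or_imp, forall_eq, exists_eq_or_imp,
      exists_eq_left, Prod.mk_le_mk]
    omega

theorem profileNF_nf_split (hm : 1 ≤ m) :
    profileNF (n, m) {(1, 0), (0, m)} = {(0, m - 1)} := by
  refine profileNF_eq_of_isAntichain IsAntichain.singleton fun ⟨a, b⟩ ↦ ?_
  simp only [mem_insert_iff, mem_singleton_iff, forall_eq_or_imp, forall_eq, exists_eq_left,
    Prod.mk_le_mk]
  omega

def staircase (n m s : ℕ) : Set (ℕ × ℕ) :=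
  {p | (p.1 + p.2 = s ∧ 2 ≤ p.2 ∧ p.2 ≤ m ∧ p.1 < n) ∨
       (n + 2 ≤ s ∧ p.1 = n ∧ p.2 + 2 + n = s) ∨
       (s ≤ n ∧ p.1 = s ∧ p.2 = 1) ∨
       (s < n ∧ p.1 = s + 1 ∧ p.2 = 0)}

theorem isAntichain_staircase (s : ℕ) : IsAntichain (· ≤ ·) (staircase n m s) := by
  rintro ⟨a, b⟩ hp ⟨c, d⟩ hq hne
  simp only [staircase, mem_ofPred_eq] at hp hq
  simp only [ne_eq, Prod.mk.injEq] at hne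
  simp only [Pi.compl_apply, compl_iff_not, Prod.mk_le_mk]
  omega

theorem staircase_one (hn : 2 ≤ n) : staircase n m 1 = {(2, 0), (1, 1)} := by
  ext ⟨a, b⟩
  simp only [staircase, mem_ofPred_eq, mem_insert_iff, mem_singleton_iff, Prod.mk.injEq]
  omega

theorem profileNF_nf_nf_split (hm : 1 ≤ m) :
    profileNF (n, m) {(0, m - 1)} = staircase n m (n + m) := by
  refine profileNF_eq_of_isAntichain (isAntichain_staircase _) fun ⟨a, b⟩ ↦ ?_
  simp only [mem_singleton_iff, forall_eq, Prod.mk_le_mk]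
  constructor
  · rintro ⟨⟨ha, hb⟩, hb'⟩
    exact ⟨(n, m - 2), Or.inr (Or.inl (by omega)), by omega, by omega⟩
  · rintro ⟨⟨c, d⟩, hcd, hac, hbd⟩
    simp only [staircase, mem_ofPred_eq] at hcd
    omega

theorem exists_mem_staircase_sub_one_ge {s a b : ℕ} (hs : 2 ≤ s) (hsnm : s ≤ n + m)
    (hab : (a, b) ≤ (n, m)) (hfree : ∀ t ∈ staircase n m s, ¬ t ≤ (a, b)) :
    ∃ t ∈ staircase n m (s - 1), (a, b) ≤ t := by
  rw [Prod.mk_le_mk] at hab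
  have hfree' (c d : ℕ) (hcd : (c, d) ∈ staircase n m s) (hc : c ≤ a) (hd : d ≤ b) : False :=
    hfree (c, d) hcd (Prod.mk_le_mk.2 ⟨hc, hd⟩)
  have h1 : ¬ (2 ≤ min b s ∧ s ≤ a + min b s ∧ s < n + min b s) := fun _ ↦
    hfree' (s - min b s) (min b s) (Or.inl (by omega)) (by omega) (min_le_left _ _)
  have h2 : ¬ (n + 2 ≤ s ∧ n ≤ a ∧ s - 2 - n ≤ b) := fun _ ↦
    hfree' n (s - 2 - n) (Or.inr (Or.inl (by omega))) (by omega) (by omega)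
  have h3 : ¬ (s ≤ n ∧ s ≤ a ∧ 1 ≤ b) := fun _ ↦
    hfree' s 1 (Or.inr (Or.inr (Or.inl (by omega)))) (by omega) (by omega)
  have h4 : ¬ (s < n ∧ s + 1 ≤ a) := fun _ ↦
    hfree' (s + 1) 0 (Or.inr (Or.inr (Or.inr (by omega)))) (by omega) (by omega)
  simp only [staircase, mem_ofPred_eq]
  obtain h | h | h | h : (b ≤ min m (s - 1 - a) ∧ 2 ≤ min m (s - 1 - a) ∧
      s < n + 1 + min m (s - 1 - a) ∧ a + min m (s - 1 - a) + 1 ≤ s) ∨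
      (n + 3 ≤ s ∧ b + 3 + n ≤ s) ∨ (s - 1 ≤ n ∧ a ≤ s - 1 ∧ b ≤ 1) ∨
      (s ≤ n ∧ a ≤ s ∧ b = 0) := by omega
  · exact ⟨(s - 1 - min m (s - 1 - a), min m (s - 1 - a)), Or.inl (by omega), by omega, by omega⟩
  · exact ⟨(n, s - 3 - n), Or.inr (Or.inl (by omega)), by omega, by omega⟩
  · exact ⟨(s - 1, 1), Or.inr (Or.inr (Or.inl (by omega))), by omega, by omega⟩
  · exact ⟨(s, 0), Or.inr (Or.inr (Or.inr (by omega))), by omega, by omega⟩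

theorem profileNF_staircase (hm : 1 ≤ m) {s : ℕ} (hs : 2 ≤ s) (hsnm : s ≤ n + m) :
    profileNF (n, m) (staircase n m s) = staircase n m (s - 1) := by
  refine profileNF_eq_of_isAntichain (isAntichain_staircase _) fun ⟨a, b⟩ ↦ ⟨?_, ?_⟩
  · rintro ⟨hab, hfree⟩
    exact exists_mem_staircase_sub_one_ge hs hsnm hab hfree
  · rintro ⟨⟨c, d⟩, hcd, hac, hbd⟩
    dsimp only at hac hbd
    refine ⟨Prod.mk_le_mk.2 ?_, fun ⟨e, f⟩ hef hle ↦ ?_⟩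
    · simp only [staircase, mem_ofPred_eq] at hcd
      omega
    · rw [Prod.mk_le_mk] at hle
      simp only [staircase, mem_ofPred_eq] at hcd hef
      omega

theorem splitGraph_eq_ofProfiles : splitGraph n m = ofProfiles {(2, 0), (1, 1)} := by
  ext e
  simp only [splitGraph, ofProfiles, mem_ofPred_eq, mem_preimage, mem_insert_iff,
    mem_singleton_iff, profile, Prod.mk.injEq, ncard_eq_two, ncard_eq_one]
  rw [ncard_eq_zero]
  constructor
  · rintro (⟨i, j, hij, rfl⟩ | ⟨i, j, rfl⟩)
    · exact Or.inl ⟨⟨i, j, hij, by ext; simp⟩, by ext; simp⟩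
    · exact Or.inr ⟨⟨i, by ext; simp⟩, ⟨j, by ext; simp⟩⟩
  · rintro (⟨⟨i, j, hij, hA⟩, hB⟩ | ⟨⟨i, hA⟩, ⟨j, hB⟩⟩) <;>
      rw [← image_preimage_inl_union_image_preimage_inr e, hA, hB]
    · exact Or.inl ⟨i, j, hij, by simp [image_pair]⟩
    · exact Or.inr ⟨i, j, by simp [pair_comm]⟩

theorem sUnion_splitGraph (hn : 1 ≤ n) (hm : 1 ≤ m) : ⋃₀ splitGraph n m = univ := by
  refine eq_univ_of_forall fun v ↦ mem_sUnion.2 ?_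
  rcases v with i | j
  · exact ⟨{Sum.inl i, Sum.inr ⟨0, hm⟩}, Or.inr ⟨i, _, rfl⟩, Or.inl rfl⟩
  · exact ⟨{Sum.inl ⟨0, hn⟩, Sum.inr j}, Or.inr ⟨_, j, rfl⟩, Or.inr rfl⟩

theorem ncard_of_mem_splitGraph {e : Set (Fin n ⊕ Fin m)} (he : e ∈ splitGraph n m) :
    e.ncard = 2 := by
  rw [splitGraph_eq_ofProfiles, ofProfiles, mem_preimage, mem_insert_iff, mem_singleton_iff] at he
  rcases he with he | he <;> simp [ncard_eq_profile_fst_add_snd, he]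

theorem not_isGraphProfileSet_nf_split (hn : 1 ≤ n) :
    ¬ IsGraphProfileSet (n, m) {(1, 0), (0, m)} := fun h ↦
  absurd (h.1 (1, 0) (Or.inl rfl) (Prod.mk_le_mk.2 ⟨hn, Nat.zero_le m⟩)) (by decide)

theorem not_isGraphProfileSet_nf_nf_split : ¬ IsGraphProfileSet (n, m) {(0, m - 1)} := by
  rintro ⟨-, ⟨t, rfl, ht⟩, -⟩
  exact ht.false

theorem not_isGraphProfileSet_staircase (hn : 2 ≤ n) (hm : 1 ≤ m) {s : ℕ} (hs : 2 ≤ s)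
    (hsnm : s ≤ n + m) : ¬ IsGraphProfileSet (n, m) (staircase n m s) := by
  rintro ⟨hsum, -, ⟨a, b⟩, hab, hb⟩
  by_cases hsn : s ≤ n
  · have := hsum (s, 1) (Or.inr (Or.inr (Or.inl ⟨hsn, rfl, rfl⟩))) (Prod.mk_le_mk.2 ⟨hsn, hm⟩)
    omega
  · -- for `s > n` no staircase point with a vertex in `B` has exactly two vertices
    have hab' := hab
    simp only [staircase, mem_ofPred_eq] at hab'
    have := hsum (a, b) hab (Prod.mk_le_mk.2 (by omega))
    dsimp only at this hb
    omega

theorem nf_ofProfiles_fin (T : Set (ℕ × ℕ)) :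
    nf (ofProfiles T : Set (Set (Fin n ⊕ Fin m))) = ofProfiles (profileNF (n, m) T) := by
  rw [nf_ofProfiles, Nat.card_fin, Nat.card_fin]

theorem nf_splitGraph (hn : 1 ≤ n) (hm : 1 ≤ m) :
    nf (splitGraph n m) = ofProfiles {(1, 0), (0, m)} := by
  rw [splitGraph_eq_ofProfiles, nf_ofProfiles_fin, profileNF_split hn hm]

theorem nf_iterate_two_splitGraph (hn : 1 ≤ n) (hm : 1 ≤ m) :
    nf^[2] (splitGraph n m) = ofProfiles {(0, m - 1)} := by
  rw [Function.iterate_succ_apply', Function.iterate_one, nf_splitGraph hn hm, nf_ofProfiles_fin,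
    profileNF_nf_split hm]

theorem nf_iterate_splitGraph (hn : 1 ≤ n) (hm : 1 ≤ m) {q : ℕ} (hq : 3 ≤ q)
    (hqnm : q ≤ n + m + 2) :
    nf^[q] (splitGraph n m) = ofProfiles (staircase n m (n + m + 3 - q)) := by
  induction q, hq using Nat.le_induction with
  | base =>
    rw [Function.iterate_succ_apply', nf_iterate_two_splitGraph hn hm, nf_ofProfiles_fin,
      profileNF_nf_nf_split hm, Nat.add_sub_cancel]
  | succ q hq ih =>
    rw [Function.iterate_succ_apply', ih (by omega), nf_ofProfiles_fin,
      profileNF_staircase hm (by omega) (by omega), Nat.sub_sub]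

end SplitGraph

/-- For `n ≥ 2`, `m ≥ 1`, the NF-number of the complete split graph `S_{n,m}`
(the least `q > 0` with `δ_NF^(q)(Δ(S_{n,m})) ≅ Δ(S_{n,m})`) equals
`n + m + 2`. -/
theorem splitGraph_NF_number (n m : ℕ) (hn : 2 ≤ n) (hm : 1 ≤ m) :
    IsLeast {q : ℕ | 0 < q ∧ IsIsoC (nf^[q] (splitGraph n m)) (splitGraph n m)}
      (n + m + 2) := by
  have hn₁ : 1 ≤ n := by omega
  refine ⟨⟨by omega, ?_⟩, fun q ⟨hq, hiso⟩ ↦ not_lt.1 fun hlt ↦ ?_⟩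
  · rw [nf_iterate_splitGraph hn₁ hm (by omega) le_rfl, show n + m + 3 - (n + m + 2) = 1 by omega,
      staircase_one hn, ← splitGraph_eq_ofProfiles]
    exact ⟨Equiv.refl _, fun S ↦ by simp⟩
  obtain ⟨T, hT, hTgraph⟩ : ∃ T, nf^[q] (splitGraph n m) = ofProfiles T ∧
      ¬ IsGraphProfileSet (n, m) T := by
    obtain rfl | rfl | hq₃ : q = 1 ∨ q = 2 ∨ 3 ≤ q := by omega
    · exact ⟨_, nf_splitGraph hn₁ hm, not_isGraphProfileSet_nf_split hn₁⟩
    · exact ⟨_, nf_iterate_two_splitGraph hn₁ hm, not_isGraphProfileSet_nf_nf_split⟩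
    · exact ⟨_, nf_iterate_splitGraph hn₁ hm hq₃ hlt.le,
        not_isGraphProfileSet_staircase hn hm (by omega) (by omega)⟩
  have : NeZero n := ⟨by omega⟩
  have : NeZero m := ⟨by omega⟩
  rw [hT] at hiso
  apply hTgraph
  simpa only [Nat.card_fin] using
    hiso.isGraphProfileSet (fun _ ↦ ncard_of_mem_splitGraph) (sUnion_splitGraph hn₁ hm)
end
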